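/- arXiv:2412.02131 — 2 statements merged into one kernel-verified Lean document; each statement's English description precedes it below -/
import Mathlib

section
/- Exponential decay of the ground state: for every n ∈ ℕ there exists a constant C_n > 0 such that the n-th derivative of q satisfies |q^{(n)}(r)| ≤ C_n r^{−1/2} e^{−r} for all r > 1. -/
open Real Filter Set

noncomputable section

namespace GSDecay

set_option maxHeartbeats 1000000

variable (q : ℝ → ℝ)

def uu : ℝ → ℝ := fun r => Real.sqrt r * q r
def uu1 : ℝ → ℝ := fun r => 1 / (2 * Real.sqrt r) * q r + Real.sqrt r * deriv q r
def aa : ℝ → ℝ := fun r => 1 - 1 / (4 * r ^ 2) - (q r) ^ 2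
def EE : ℝ → ℝ := fun t => (1 / (4 * t ^ 2) + (q t) ^ 2) * uu q t
def FF : ℝ → ℝ := fun t => Real.exp (-t) * (uu1 q t + uu q t)

variable {q}

lemma div_exp_bound {X U c W : ℝ} (hX : 1 ≤ X) (h : c * X ^ 2 + W ≤ X * U) :
    c * X - |W| ≤ U := by
  have hX0 : (0:ℝ) < X := lt_of_lt_of_le one_pos hX
  nlinarith [neg_abs_le W, abs_nonneg W]



section calc1

variable (hsm : ContDiffOn ℝ (⊤:ℕ∞) q (Set.Ioi 0))
include hsm

lemma cd_deriv : ContDiffOn ℝ (⊤:ℕ∞) (deriv q) (Set.Ioi 0) := by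
  exact hsm.deriv_of_isOpen isOpen_Ioi (m := (⊤:ℕ∞)) (by simp)

lemma hder1 {x : ℝ} (hx : 0 < x) : HasDerivAt q (deriv q x) x := by
  have h1 : ContDiffAt ℝ (⊤:ℕ∞) q x := hsm.contDiffAt (isOpen_Ioi.mem_nhds hx)
  exact (h1.differentiableAt (by simp)).hasDerivAt

lemma hder2 {x : ℝ} (hx : 0 < x) : HasDerivAt (deriv q) (deriv (deriv q) x) x := by
  have h1 : ContDiffAt ℝ (⊤:ℕ∞) (deriv q) x :=
    (cd_deriv hsm).contDiffAt (isOpen_Ioi.mem_nhds hx)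
  exact (h1.differentiableAt (by simp)).hasDerivAt

lemma hasDerivAt_uu {x : ℝ} (hx : 0 < x) : HasDerivAt (uu q) (uu1 q x) x := by
  have hs := Real.hasDerivAt_sqrt (ne_of_gt hx)
  exact hs.mul (hder1 hsm hx)

lemma hasDerivAt_uu1 {x : ℝ} (hx : 0 < x)
    (hODE : deriv (deriv q) x = q x - (q x) ^ 3 - deriv q x / x) :
    HasDerivAt (uu1 q) (aa q x * uu q x) x := by
  have hsqx : (0:ℝ) < Real.sqrt x := Real.sqrt_pos.2 hx
  have hsq : Real.sqrt x ^ 2 = x := Real.sq_sqrt hx.le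
  have hs := Real.hasDerivAt_sqrt (ne_of_gt hx)
  have h2s : HasDerivAt (fun y => 2 * Real.sqrt y) (2 * (1 / (2 * Real.sqrt x))) x :=
    hs.const_mul 2
  have hne : 2 * Real.sqrt x ≠ 0 := by positivity
  have hinv : HasDerivAt (fun y => (2 * Real.sqrt y)⁻¹)
      (-(2 * (1 / (2 * Real.sqrt x))) / (2 * Real.sqrt x) ^ 2) x := h2s.inv hne
  have hf : HasDerivAt (fun y => (2 * Real.sqrt y)⁻¹ * q y)
      (-(2 * (1 / (2 * Real.sqrt x))) / (2 * Real.sqrt x) ^ 2 * q x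
        + (2 * Real.sqrt x)⁻¹ * deriv q x) x := hinv.mul (hder1 hsm hx)
  have hg : HasDerivAt (fun y => Real.sqrt y * deriv q y)
      (1 / (2 * Real.sqrt x) * deriv q x + Real.sqrt x * deriv (deriv q) x) x :=
    hs.mul (hder2 hsm hx)
  have hsum := hf.add hg
  have hu1eq : uu1 q = fun y => (2 * Real.sqrt y)⁻¹ * q y + Real.sqrt y * deriv q y := by
    funext y; simp [uu1, one_div]
  rw [hu1eq]
  convert hsum using 1
  · rfl
  · rfl
  · rfl
  rw [hODE]
  simp only [uu, aa]
  set s := Real.sqrt x with hsdef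
  set Q := q x with hQ
  set Q1 := deriv q x with hQ1
  have hxss : x = s * s := (Real.mul_self_sqrt hx.le).symm
  rw [hxss]
  have hsne : s ≠ 0 := ne_of_gt hsqx
  field_simp
  ring

end calc1

/-- Growth contradiction lemma: `√t * q t` can't dominate a growing exponential if `q → 0`. -/
lemma growth_contra (hlim : Tendsto q atTop (nhds 0))
    {c β K t₀ : ℝ} (hc : 0 < c) (hβ : 0 < β)
    (h : ∀ t, t₀ ≤ t → c * Real.exp (β * t) - K ≤ Real.sqrt t * q t) : False := by
  obtain ⟨T₁, hT₁⟩ := (hlim.eventually (gt_mem_nhds (show (0:ℝ) < 1 by norm_num))).exists_forall_of_atTop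
  set M : ℝ := 4 / (c * β ^ 2) * (|K| + 2) with hM
  set t : ℝ := max (max t₀ 1) (max M T₁) with ht
  have ht1 : (1:ℝ) ≤ t := le_trans (le_max_right t₀ 1) (le_max_left _ _)
  have htM : M ≤ t := le_trans (le_max_left M T₁) (le_max_right _ _)
  have htT₁ : T₁ ≤ t := le_trans (le_max_right M T₁) (le_max_right _ _)
  have ht₀ : t₀ ≤ t := le_trans (le_max_left t₀ 1) (le_max_left _ _)
  -- exp (β t) ≥ (β t / 2 + 1)^2
  have hexp : (β * t / 2 + 1) ^ 2 ≤ Real.exp (β * t) := by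
    have h1 : β * t / 2 + 1 ≤ Real.exp (β * t / 2) := Real.add_one_le_exp _
    have h2 : (0:ℝ) ≤ β * t / 2 + 1 := by positivity
    calc (β * t / 2 + 1) ^ 2 ≤ Real.exp (β * t / 2) ^ 2 := by nlinarith
      _ = Real.exp (β * t) := by rw [← Real.exp_nat_mul]; ring_nf
  -- c * exp(β t) - K ≥ √t
  have hsqt : Real.sqrt t ≤ t := by
    nlinarith [Real.sq_sqrt (show (0:ℝ) ≤ t by linarith), Real.sqrt_nonneg t, ht1]
  have hKt : t + |K| ≤ c * Real.exp (β * t) := by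
    have h3 : c * β ^ 2 * (t * M) / 4 = t * (|K| + 2) := by
      rw [hM]; field_simp
    have h4 : t * M ≤ t ^ 2 := by nlinarith
    have hbt : 0 < β * t := by nlinarith
    have h5 : c * (β * t / 2 + 1) ^ 2 ≥ c * (β ^ 2 * t ^ 2 / 4) := by nlinarith
    have h6 : c * (β * t / 2 + 1) ^ 2 ≤ c * Real.exp (β * t) :=
      mul_le_mul_of_nonneg_left hexp hc.le
    have hcb : 0 < c * β ^ 2 := by positivity
    have h7 : c * β ^ 2 * (t * M) / 4 ≤ c * β ^ 2 * t ^ 2 / 4 := by nlinarith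
    nlinarith [abs_nonneg K]
  have hq1 : 1 ≤ q t := by
    have h6 := h t ht₀
    have h7 : Real.sqrt t ≤ Real.sqrt t * q t := by
      have : Real.sqrt t ≤ c * Real.exp (β * t) - K := by
        have := abs_le.1 (le_refl |K|) |>.2
        have hK : K ≤ |K| := le_abs_self K
        linarith
      linarith
    have hst : 0 < Real.sqrt t := Real.sqrt_pos.2 (by linarith)
    nlinarith
  exact absurd (hT₁ t htT₁) (by linarith)

/-- Monotonicity helper: nonnegative derivative on `Ici a` gives monotonicity. -/
lemma mono_of_deriv {F F' : ℝ → ℝ} {A : ℝ}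
    (hF : ∀ t, A ≤ t → HasDerivAt F (F' t) t)
    (h0 : ∀ t, A ≤ t → 0 ≤ F' t) : MonotoneOn F (Set.Ici A) := by
  apply monotoneOn_of_deriv_nonneg (convex_Ici A)
  · exact fun t ht => (hF t ht).continuousAt.continuousWithinAt
  · intro t ht
    rw [interior_Ici] at ht
    exact ((hF t (le_of_lt ht)).differentiableAt).differentiableWithinAt
  · intro t ht
    rw [interior_Ici] at ht
    rw [(hF t (le_of_lt ht)).deriv]
    exact h0 t (le_of_lt ht)

lemma anti_of_deriv {F F' : ℝ → ℝ} {A : ℝ}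
    (hF : ∀ t, A ≤ t → HasDerivAt F (F' t) t)
    (h0 : ∀ t, A ≤ t → F' t ≤ 0) : AntitoneOn F (Set.Ici A) := by
  apply antitoneOn_of_deriv_nonpos (convex_Ici A)
  · exact fun t ht => (hF t ht).continuousAt.continuousWithinAt
  · intro t ht
    rw [interior_Ici] at ht
    exact ((hF t (le_of_lt ht)).differentiableAt).differentiableWithinAt
  · intro t ht
    rw [interior_Ici] at ht
    rw [(hF t (le_of_lt ht)).deriv]
    exact h0 t (le_of_lt ht)


lemma exp_neg_hasDerivAt (t : ℝ) :
    HasDerivAt (fun t : ℝ => Real.exp (-t)) (Real.exp (-t) * (-1)) t :=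
  ((hasDerivAt_id t).neg).exp.congr_deriv (by simp)

lemma exp_cmul_hasDerivAt (a t : ℝ) :
    HasDerivAt (fun t : ℝ => Real.exp (a * t)) (Real.exp (a * t) * a) t :=
  ((hasDerivAt_id t).const_mul a).exp.congr_deriv (by simp only [id_eq, mul_one])

lemma exp_half_sq (t : ℝ) : Real.exp ((1/2) * t) ^ 2 = Real.exp t := by
  rw [sq, ← Real.exp_add]; congr 1; ring

lemma exp_two_sq (t : ℝ) : Real.exp t ^ 2 = Real.exp (2 * t) := by
  rw [sq, ← Real.exp_add]; ring_nf

lemma exp_mul_FF (t : ℝ) : Real.exp (2*t) * FF q t = Real.exp t * (uu1 q t + uu q t) := by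
  simp only [FF]
  rw [show Real.exp (2*t) * (Real.exp (-t) * (uu1 q t + uu q t))
      = (Real.exp (2*t) * Real.exp (-t)) * (uu1 q t + uu q t) by ring, ← Real.exp_add]
  ring_nf

/-- The analytic core. -/
lemma core (hsm : ContDiffOn ℝ (⊤:ℕ∞) q (Set.Ioi 0))
    (hpos : ∀ r : ℝ, 0 ≤ r → 0 < q r)
    (hlim : Tendsto q atTop (nhds 0))
    (hODE : ∀ x : ℝ, 0 < x → deriv (deriv q) x = q x - (q x) ^ 3 - deriv q x / x) :
    ∃ R₀ : ℝ, 2 ≤ R₀ ∧ ∃ C₂ : ℝ, 0 < C₂ ∧ ∀ t, R₀ ≤ t →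
      uu q t ≤ C₂ * Real.exp (-t) ∧ |uu1 q t| ≤ uu q t := by
  classical
  obtain ⟨N, hN⟩ := (hlim.eventually (gt_mem_nhds
    (show (0:ℝ) < 1/2 by norm_num))).exists_forall_of_atTop
  obtain ⟨R₀, hR₀def⟩ : ∃ R₀ : ℝ, R₀ = max N 2 := ⟨_, rfl⟩
  have hR₀2 : (2:ℝ) ≤ R₀ := hR₀def ▸ le_max_right _ _
  have hR₀0 : (0:ℝ) < R₀ := by linarith
  have hsmall : ∀ t, R₀ ≤ t → q t < 1/2 := fun t ht =>
    hN t (le_trans (hR₀def ▸ le_max_left _ _) ht)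
  have htpos : ∀ t:ℝ, R₀ ≤ t → (0:ℝ) < t := fun t ht => lt_of_lt_of_le hR₀0 ht
  have hqpos : ∀ t, R₀ ≤ t → 0 < q t := fun t ht => hpos t (htpos t ht).le
  have hUpos : ∀ t, R₀ ≤ t → 0 < uu q t := fun t ht =>
    mul_pos (Real.sqrt_pos.2 (htpos t ht)) (hqpos t ht)
  have hU' : ∀ t, R₀ ≤ t → HasDerivAt (uu q) (uu1 q t) t := fun t ht =>
    hasDerivAt_uu hsm (htpos t ht)
  have hU1' : ∀ t, R₀ ≤ t → HasDerivAt (uu1 q) (aa q t * uu q t) t := fun t ht =>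
    hasDerivAt_uu1 hsm (htpos t ht) (hODE t (htpos t ht))
  have haux : ∀ t, R₀ ≤ t → (1/(4*t^2) + (q t)^2 ≤ 1/2 ∧ 1/2 ≤ aa q t) := by
    intro t ht
    have h1 : q t ^ 2 ≤ 1/4 := by nlinarith [hqpos t ht, hsmall t ht]
    have ht2 : (2:ℝ) ≤ t := le_trans hR₀2 ht
    have h2 : 1/(4*t^2) ≤ 1/16 := by
      rw [div_le_div_iff₀ (by nlinarith) (by norm_num)]
      nlinarith
    refine ⟨by linarith, ?_⟩
    simp only [aa]; linarith
  -- ψ step : u' + u/2 ≤ 0 on [R₀,∞)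
  have hψ : ∀ t, R₀ ≤ t → uu1 q t + (1/2) * uu q t ≤ 0 := by
    by_contra hcon
    push_neg at hcon
    obtain ⟨t₀, ht₀, hψpos⟩ := hcon
    have hψ' : ∀ t, R₀ ≤ t → HasDerivAt (fun t => uu1 q t + (1/2) * uu q t)
        (aa q t * uu q t + (1/2) * uu1 q t) t := fun t ht =>
      (hU1' t ht).add ((hU' t ht).const_mul (1/2))
    have hΦ' : ∀ t, R₀ ≤ t → HasDerivAt
        (fun t => Real.exp (-((1/2) * t)) * (uu1 q t + (1/2) * uu q t))
        (Real.exp (-((1/2) * t)) * ((aa q t - 1/4) * uu q t)) t := by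
      intro t ht
      have he : HasDerivAt (fun t : ℝ => Real.exp (-((1/2) * t)))
          (Real.exp (-((1/2) * t)) * (-(1/2))) t := by
        have := exp_cmul_hasDerivAt (-(1/2)) t
        simp only [neg_mul] at this ⊢
        exact this.congr_deriv (by ring)
      have h2 := he.mul (hψ' t ht)
      convert h2 using 1
      · rfl
      · rfl
      · rfl
      ring
    have hΦmono : MonotoneOn
        (fun t => Real.exp (-((1/2) * t)) * (uu1 q t + (1/2) * uu q t)) (Set.Ici R₀) := by
      apply mono_of_deriv hΦ'
      intro t ht
      have h3 := (haux t ht).2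
      have hU0 := (hUpos t ht).le
      have h4 : (0:ℝ) ≤ (aa q t - 1/4) * uu q t := by nlinarith
      positivity
    obtain ⟨c, hcdef⟩ : ∃ c : ℝ, c = Real.exp (-((1/2) * t₀)) * (uu1 q t₀ + (1/2) * uu q t₀) :=
      ⟨_, rfl⟩
    have hc : 0 < c := hcdef ▸ mul_pos (Real.exp_pos _) hψpos
    have hW' : ∀ t, t₀ ≤ t → HasDerivAt
        (fun t => Real.exp ((1/2) * t) * uu q t - c * Real.exp t)
        (Real.exp t * (Real.exp (-((1/2) * t)) * (uu1 q t + (1/2) * uu q t)) - c * Real.exp t)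
        t := by
      intro t ht
      have he := exp_cmul_hasDerivAt (1/2) t
      have h1 := (he.mul (hU' t (le_trans ht₀ ht))).sub ((Real.hasDerivAt_exp t).const_mul c)
      convert h1 using 1
      · rfl
      · rfl
      · rfl
      have hh : Real.exp t * (Real.exp (-((1/2) * t)) * (uu1 q t + (1/2) * uu q t))
          = Real.exp ((1/2)*t) * (uu1 q t + (1/2) * uu q t) := by
        rw [show Real.exp t * (Real.exp (-((1/2) * t)) * (uu1 q t + (1/2) * uu q t))
            = (Real.exp t * Real.exp (-((1/2) * t))) * (uu1 q t + (1/2) * uu q t) by ring,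
          ← Real.exp_add]
        ring_nf
      rw [hh]; ring
    have hWmono : MonotoneOn
        (fun t => Real.exp ((1/2) * t) * uu q t - c * Real.exp t) (Set.Ici t₀) := by
      apply mono_of_deriv hW'
      intro t ht
      have hΦt : c ≤ Real.exp (-((1/2) * t)) * (uu1 q t + (1/2) * uu q t) := by
        rw [hcdef]
        exact hΦmono (mem_Ici.2 ht₀) (mem_Ici.2 (le_trans ht₀ ht)) ht
      nlinarith [Real.exp_pos t]
    refine growth_contra hlim (half_pos hc) (show (0:ℝ) < 1/2 by norm_num)
      (K := |Real.exp ((1/2) * t₀) * uu q t₀ - c * Real.exp t₀|) (t₀ := t₀) (fun t ht => ?_)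
    have h1 : Real.exp ((1/2) * t₀) * uu q t₀ - c * Real.exp t₀
        ≤ Real.exp ((1/2) * t) * uu q t - c * Real.exp t :=
      hWmono (mem_Ici.2 (le_refl t₀)) (mem_Ici.2 ht) ht
    have hX1 : 1 ≤ Real.exp ((1/2) * t) :=
      Real.one_le_exp (by nlinarith [le_trans hR₀2 (le_trans ht₀ ht)])
    have h2 : (c/2) * Real.exp ((1/2) * t) ^ 2 + (Real.exp ((1/2) * t₀) * uu q t₀ - c * Real.exp t₀)
        ≤ Real.exp ((1/2) * t) * uu q t := by
      rw [exp_half_sq]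
      nlinarith [Real.exp_pos t]
    have h3 := div_exp_bound hX1 h2
    calc c/2 * Real.exp (1/2 * t) - |Real.exp ((1/2) * t₀) * uu q t₀ - c * Real.exp t₀|
        ≤ uu q t := h3
      _ = Real.sqrt t * q t := rfl
  -- u' ≤ 0, u antitone, q antitone
  have hU1neg : ∀ t, R₀ ≤ t → uu1 q t ≤ 0 := fun t ht => by
    nlinarith [hψ t ht, hUpos t ht]
  have hUanti : AntitoneOn (uu q) (Set.Ici R₀) := anti_of_deriv hU' hU1neg
  have hq'le : ∀ t, R₀ ≤ t → deriv q t ≤ 0 := by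
    intro t ht
    have hst : 0 < Real.sqrt t := Real.sqrt_pos.2 (htpos t ht)
    have h1 : Real.sqrt t * deriv q t = uu1 q t - 1/(2*Real.sqrt t) * q t := by
      simp only [uu1]; ring
    have h2 : 0 < 1/(2*Real.sqrt t) * q t := by
      have := hqpos t ht; positivity
    nlinarith [hU1neg t ht]
  have hqanti : AntitoneOn q (Set.Ici R₀) :=
    anti_of_deriv (fun t ht => hder1 hsm (htpos t ht)) hq'le
  -- E = ε·u is antitone and nonneg
  have hE0 : ∀ t, R₀ ≤ t → 0 ≤ EE q t := by
    intro t ht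
    have h1 := (hUpos t ht).le
    have h2 := htpos t ht
    simp only [EE]
    positivity
  have hEanti : AntitoneOn (EE q) (Set.Ici R₀) := by
    intro x hx y hy hxy
    simp only [EE]
    have hx0 := htpos x hx
    have hy0 := htpos y hy
    have h1 : 1/(4*y^2) ≤ 1/(4*x^2) := by
      rw [div_le_div_iff₀ (by positivity) (by positivity)]
      nlinarith
    have h2 : (q y)^2 ≤ (q x)^2 := by
      have := hqanti hx hy hxy
      nlinarith [hqpos y hy]
    have h3 : uu q y ≤ uu q x := hUanti hx hy hxy
    have h4 : 0 ≤ uu q y := (hUpos y hy).le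
    have h5 : (0:ℝ) ≤ 1/(4*x^2) + q x^2 := by positivity
    have h6 : (1/(4*y^2) + q y^2) * uu q y ≤ (1/(4*x^2) + q x^2) * uu q y :=
      mul_le_mul_of_nonneg_right (by linarith) h4
    have h7 := mul_le_mul_of_nonneg_left h3 h5
    linarith
  -- F and its derivative
  have hF' : ∀ t, R₀ ≤ t → HasDerivAt (FF q) (-(Real.exp (-t) * EE q t)) t := by
    intro t ht
    have h1 := (exp_neg_hasDerivAt t).mul ((hU1' t ht).add (hU' t ht))
    convert h1 using 1
    · rfl
    · rfl
    · rfl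
    simp only [EE, aa, Pi.add_apply]
    ring
  have hFanti : AntitoneOn (FF q) (Set.Ici R₀) := by
    apply anti_of_deriv hF'
    intro t ht
    have h1 := hE0 t ht
    have h2 := (Real.exp_pos (-t)).le
    nlinarith
  -- F is eventually small
  have hFsmall : ∀ r, R₀ ≤ r → ∀ η : ℝ, 0 < η → ∃ s, r ≤ s ∧ FF q s ≤ η := by
    intro r hr η hη
    by_contra hcon
    push_neg at hcon
    have hW' : ∀ t, r ≤ t → HasDerivAt
        (fun t => Real.exp t * uu q t - η/2 * Real.exp (2*t))
        (Real.exp (2*t) * FF q t - η/2 * (Real.exp (2*t) * 2)) t := by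
      intro t ht
      have h2t : HasDerivAt (fun t : ℝ => Real.exp (2*t)) (Real.exp (2*t) * 2) t :=
        exp_cmul_hasDerivAt 2 t
      have h1 := ((Real.hasDerivAt_exp t).mul (hU' t (le_trans hr ht))).sub
        (h2t.const_mul (η/2))
      convert h1 using 1
      · rfl
      · rfl
      · rfl
      rw [exp_mul_FF]; ring
    have hWmono : MonotoneOn
        (fun t => Real.exp t * uu q t - η/2 * Real.exp (2*t)) (Set.Ici r) := by
      apply mono_of_deriv hW'
      intro t ht
      have h1 : η < FF q t := hcon t ht
      nlinarith [Real.exp_pos (2*t)]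
    refine growth_contra hlim (half_pos hη) one_pos
      (K := |Real.exp r * uu q r - η/2 * Real.exp (2*r)|) (t₀ := r) (fun t ht => ?_)
    have h1 : Real.exp r * uu q r - η/2 * Real.exp (2*r)
        ≤ Real.exp t * uu q t - η/2 * Real.exp (2*t) :=
      hWmono (mem_Ici.2 (le_refl r)) (mem_Ici.2 ht) ht
    have hX1 : 1 ≤ Real.exp t := Real.one_le_exp (by linarith [le_trans hR₀2 hr])
    have h2 : (η/2) * Real.exp t ^ 2 + (Real.exp r * uu q r - η/2 * Real.exp (2*r))
        ≤ Real.exp t * uu q t := by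
      rw [exp_two_sq]
      linarith
    have h3 := div_exp_bound hX1 h2
    rw [one_mul]
    exact h3
  -- key differential inequality : u' + u ≤ ε u
  have hkey : ∀ r, R₀ ≤ r → uu1 q r + uu q r ≤ (1/(4*r^2) + (q r)^2) * uu q r := by
    intro r hr
    have hFle : FF q r ≤ Real.exp (-r) * EE q r := by
      apply le_of_forall_pos_le_add
      intro η hη
      obtain ⟨s, hrs, hFs⟩ := hFsmall r hr η hη
      have hP' : ∀ t, r ≤ t → HasDerivAt (fun t => FF q t - EE q r * Real.exp (-t))
          (-(Real.exp (-t) * EE q t) - EE q r * (Real.exp (-t) * (-1))) t := by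
        intro t ht
        exact (hF' t (le_trans hr ht)).sub ((exp_neg_hasDerivAt t).const_mul (EE q r))
      have hPmono : MonotoneOn (fun t => FF q t - EE q r * Real.exp (-t)) (Set.Ici r) := by
        apply mono_of_deriv hP'
        intro t ht
        have h1 : EE q t ≤ EE q r := hEanti (mem_Ici.2 hr) (mem_Ici.2 (le_trans hr ht)) ht
        have h2 := mul_nonneg (sub_nonneg.2 h1) (Real.exp_pos (-t)).le
        nlinarith [Real.exp_pos (-t)]
      have h2 : FF q r - EE q r * Real.exp (-r) ≤ FF q s - EE q r * Real.exp (-s) :=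
        hPmono (mem_Ici.2 (le_refl r)) (mem_Ici.2 hrs) hrs
      have h3 : 0 ≤ EE q r * Real.exp (-s) := mul_nonneg (hE0 r hr) (Real.exp_pos _).le
      linarith
    have hFle' : Real.exp (-r) * (uu1 q r + uu q r)
        ≤ Real.exp (-r) * ((1/(4*r^2) + (q r)^2) * uu q r) := hFle
    exact (mul_le_mul_iff_of_pos_left (Real.exp_pos (-r))).1 hFle'
  -- F ≥ 0, hence u' ≥ -u
  have hF0 : ∀ t, R₀ ≤ t → 0 ≤ FF q t := by
    intro t₁ ht₁
    by_contra hcon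
    push_neg at hcon
    have hW' : ∀ t, t₁ ≤ t → HasDerivAt
        (fun t => Real.exp t * uu q t - (FF q t₁ / 2) * Real.exp (2*t))
        (Real.exp (2*t) * FF q t - (FF q t₁/2) * (Real.exp (2*t) * 2)) t := by
      intro t ht
      have h2t : HasDerivAt (fun t : ℝ => Real.exp (2*t)) (Real.exp (2*t) * 2) t :=
        exp_cmul_hasDerivAt 2 t
      have h1 := ((Real.hasDerivAt_exp t).mul (hU' t (le_trans ht₁ ht))).sub
        (h2t.const_mul (FF q t₁/2))
      convert h1 using 1
      · rfl
      · rfl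
      · rfl
      rw [exp_mul_FF]; ring
    have hWanti : AntitoneOn
        (fun t => Real.exp t * uu q t - (FF q t₁ / 2) * Real.exp (2*t)) (Set.Ici t₁) := by
      apply anti_of_deriv hW'
      intro t ht
      have h1 : FF q t ≤ FF q t₁ := hFanti (mem_Ici.2 ht₁) (mem_Ici.2 (le_trans ht₁ ht)) ht
      nlinarith [Real.exp_pos (2*t)]
    obtain ⟨Wv, hWvdef⟩ : ∃ Wv : ℝ, Wv = Real.exp t₁ * uu q t₁ - (FF q t₁/2) * Real.exp (2*t₁) :=
      ⟨_, rfl⟩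
    obtain ⟨amt, hamtdef⟩ : ∃ amt : ℝ, amt = 2 * (|Wv| + 1) / (-FF q t₁) := ⟨_, rfl⟩
    have hamt0 : 0 < amt := by
      rw [hamtdef]
      apply div_pos
      · positivity
      · linarith
    obtain ⟨s, hsdef⟩ : ∃ s : ℝ, s = max t₁ (Real.log amt) := ⟨_, rfl⟩
    have hts : t₁ ≤ s := hsdef ▸ le_max_left _ _
    have h1 : Real.exp s * uu q s - (FF q t₁/2) * Real.exp (2*s)
        ≤ Real.exp t₁ * uu q t₁ - (FF q t₁/2) * Real.exp (2*t₁) :=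
      hWanti (mem_Ici.2 (le_refl t₁)) (mem_Ici.2 hts) hts
    have hes : amt ≤ Real.exp s := by
      rw [← Real.exp_log hamt0]
      exact Real.exp_le_exp.2 (hsdef ▸ le_max_right _ _)
    have hs0 : (0:ℝ) ≤ s := le_trans (by linarith [le_trans hR₀2 ht₁]) hts
    have he2s : Real.exp s ≤ Real.exp (2*s) := Real.exp_le_exp.2 (by linarith)
    have hamt2 : amt ≤ Real.exp (2*s) := le_trans hes he2s
    have h2 : (FF q t₁/2) * Real.exp (2*s) ≤ (FF q t₁/2) * amt :=
      mul_le_mul_of_nonpos_left hamt2 (by linarith)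
    have h3 : (FF q t₁/2) * amt = -(|Wv| + 1) := by
      rw [hamtdef]
      have hne : FF q t₁ ≠ 0 := ne_of_lt hcon
      field_simp
    have h4 : 0 < Real.exp s * uu q s :=
      mul_pos (Real.exp_pos s) (hUpos s (le_trans ht₁ hts))
    nlinarith [le_abs_self Wv, neg_abs_le Wv, hWvdef]
  have hU1ge : ∀ t, R₀ ≤ t → -(uu q t) ≤ uu1 q t := by
    intro t ht
    have h1 : 0 ≤ Real.exp (-t) * (uu1 q t + uu q t) := hF0 t ht
    nlinarith [Real.exp_pos (-t)]
  -- Gronwall pass 1 : u ≤ C₁ exp(-t/2)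
  obtain ⟨C₁, hC₁def⟩ : ∃ C₁ : ℝ, C₁ = Real.exp ((1/2) * R₀) * uu q R₀ := ⟨_, rfl⟩
  have hC₁pos : 0 < C₁ := hC₁def ▸ mul_pos (Real.exp_pos _) (hUpos R₀ (le_refl R₀))
  have hG1anti : AntitoneOn (fun t => Real.exp ((1/2)*t) * uu q t) (Set.Ici R₀) := by
    apply anti_of_deriv
      (F' := fun t => Real.exp ((1/2)*t) * ((1/2) * uu q t + uu1 q t))
    · intro t ht
      have h1 := (exp_cmul_hasDerivAt (1/2) t).mul (hU' t ht)
      convert h1 using 1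
      · rfl
      · rfl
      · rfl
      ring
    · intro t ht
      have h1 := hψ t ht
      nlinarith [Real.exp_pos ((1/2)*t)]
  have hpass1 : ∀ t, R₀ ≤ t → Real.exp ((1/2)*t) * uu q t ≤ C₁ := by
    intro t ht
    rw [hC₁def]
    exact hG1anti (mem_Ici.2 (le_refl R₀)) (mem_Ici.2 ht) ht
  have hq2 : ∀ t, R₀ ≤ t → (q t)^2 ≤ C₁^2 * Real.exp (-t) := by
    intro t ht
    have ht0 := htpos t ht
    have hU2 : uu q t ^ 2 = t * (q t)^2 := by
      simp only [uu]
      rw [mul_pow, Real.sq_sqrt ht0.le]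
    have h0 : 0 ≤ Real.exp ((1/2)*t) * uu q t := mul_nonneg (Real.exp_pos _).le (hUpos t ht).le
    have h1 : (Real.exp ((1/2)*t) * uu q t)^2 ≤ C₁^2 := by
      nlinarith [hpass1 t ht]
    have h3 : Real.exp t * uu q t ^2 ≤ C₁^2 := by
      rw [mul_pow, exp_half_sq] at h1
      exact h1
    have h4 : (q t)^2 ≤ uu q t ^2 := by nlinarith [sq_nonneg (q t), le_trans hR₀2 ht]
    rw [Real.exp_neg, mul_comm (C₁^2), inv_mul_eq_div, le_div_iff₀ (Real.exp_pos t)]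
    nlinarith [Real.exp_pos t]
  -- Gronwall pass 2 : u ≤ C₂ exp(-t)
  have hG2anti : AntitoneOn
      (fun t => Real.exp (t + ((4*t)⁻¹ + C₁^2 * Real.exp (-t))) * uu q t) (Set.Ici R₀) := by
    apply anti_of_deriv (F' := fun t =>
      Real.exp (t + ((4*t)⁻¹ + C₁^2 * Real.exp (-t)))
        * ((1 + (-(4*1)/(4*t)^2 + C₁^2 * (Real.exp (-t) * (-1)))) * uu q t + uu1 q t))
    · intro t ht
      have ht0 := htpos t ht
      have h4t : (4*t) ≠ 0 := ne_of_gt (by linarith)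
      have hi1 : HasDerivAt (fun t : ℝ => (4*t)⁻¹) (-(4*1)/(4*t)^2) t :=
        ((hasDerivAt_id t).const_mul 4).inv h4t
      have hi2 : HasDerivAt (fun t : ℝ => C₁^2 * Real.exp (-t))
          (C₁^2 * (Real.exp (-t) * (-1))) t :=
        (exp_neg_hasDerivAt t).const_mul (C₁^2)
      have hi : HasDerivAt (fun t : ℝ => t + ((4*t)⁻¹ + C₁^2 * Real.exp (-t)))
          (1 + (-(4*1)/(4*t)^2 + C₁^2 * (Real.exp (-t) * (-1)))) t :=
        (hasDerivAt_id t).add (hi1.add hi2)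
      have hee := (hi.exp).mul (hU' t ht)
      convert hee using 1
      · rfl
      · rfl
      · rfl
      ring
    · intro t ht
      have ht0 := htpos t ht
      have h1 : (4*(1:ℝ))/(4*t)^2 = 1/(4*t^2) := by
        field_simp
      have h2 := hkey t ht
      have h3 := hq2 t ht
      have h4 := (hUpos t ht).le
      have h5 : (1 + (-(4*1)/(4*t)^2 + C₁^2 * (Real.exp (-t) * (-1)))) * uu q t + uu1 q t
          = (1 - 1/(4*t^2) - C₁^2 * Real.exp (-t)) * uu q t + uu1 q t := by
        have hh : -(4*(1:ℝ))/(4*t)^2 = -(1/(4*t^2)) := by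
          rw [show ((4:ℝ)*t)^2 = 16*t^2 by ring, neg_div, neg_inj,
            div_eq_div_iff (by positivity) (by positivity)]
          ring
        rw [hh]
        ring
      rw [h5]
      have hX : (1 - 1/(4*t^2) - C₁^2 * Real.exp (-t)) * uu q t + uu1 q t ≤ 0 := by
        nlinarith [mul_nonneg (sub_nonneg.2 h3) h4]
      exact mul_nonpos_iff.2 (Or.inl ⟨(Real.exp_pos _).le, hX⟩)
  obtain ⟨C₂, hC₂def⟩ : ∃ C₂ : ℝ,
      C₂ = Real.exp (R₀ + ((4*R₀)⁻¹ + C₁^2 * Real.exp (-R₀))) * uu q R₀ := ⟨_, rfl⟩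
  have hC₂pos : 0 < C₂ := hC₂def ▸ mul_pos (Real.exp_pos _) (hUpos R₀ (le_refl R₀))
  refine ⟨R₀, hR₀2, C₂, hC₂pos, fun t ht => ⟨?_, ?_⟩⟩
  · have h1 : Real.exp (t + ((4*t)⁻¹ + C₁^2 * Real.exp (-t))) * uu q t ≤ C₂ := by
      rw [hC₂def]
      exact hG2anti (mem_Ici.2 (le_refl R₀)) (mem_Ici.2 ht) ht
    have hmf0 : 0 ≤ (4*t)⁻¹ + C₁^2 * Real.exp (-t) := by
      have := htpos t ht
      positivity
    have h2 : Real.exp t ≤ Real.exp (t + ((4*t)⁻¹ + C₁^2 * Real.exp (-t))) :=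
      Real.exp_le_exp.2 (by linarith)
    have h3 : Real.exp t * uu q t ≤ C₂ := le_trans
      (mul_le_mul_of_nonneg_right h2 (hUpos t ht).le) h1
    rw [Real.exp_neg, mul_comm C₂, inv_mul_eq_div, le_div_iff₀ (Real.exp_pos t)]
    nlinarith
  · have h1 := hψ t ht
    have h2 := hU1ge t ht
    have h3 := (hUpos t ht).le
    rw [abs_le]
    constructor <;> nlinarith


/-- norm bridge -/
lemma norm_bridge (n : ℕ) (f : ℝ → ℝ) {x : ℝ} (hx : x ∈ Set.Ioi (0:ℝ)) :
    ‖iteratedFDerivWithin ℝ n f (Set.Ioi 0) x‖ = |iteratedDeriv n f x| := by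
  rw [iteratedFDerivWithin_of_isOpen n isOpen_Ioi hx]
  rw [← iteratedFDerivWithin_univ, norm_iteratedFDerivWithin_eq_norm_iteratedDerivWithin,
    iteratedDerivWithin_univ]
  exact Real.norm_eq_abs _

/-- derivatives of x ↦ x⁻¹ on positive reals -/
lemma iteratedDeriv_inv_eq (n : ℕ) : ∀ x : ℝ, 0 < x →
    iteratedDeriv n (fun y : ℝ => y⁻¹) x = (-1)^n * (n.factorial : ℝ) * x ^ (-(n:ℤ)-1) := by
  induction n with
  | zero => intro x hx; simp [iteratedDeriv_zero]
  | succ n ih =>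
    intro x hx
    rw [iteratedDeriv_succ]
    have hev : (iteratedDeriv n (fun y : ℝ => y⁻¹)) =ᶠ[nhds x]
        (fun y => (-1)^n * (n.factorial : ℝ) * y ^ (-(n:ℤ)-1)) := by
      filter_upwards [isOpen_Ioi.mem_nhds (Set.mem_Ioi.2 hx)] with y hy
      exact ih y hy
    rw [hev.deriv_eq]
    rw [deriv_const_mul _ (differentiableAt_zpow.2 (Or.inl (ne_of_gt hx)))]
    rw [deriv_zpow]
    push_cast [Nat.factorial_succ]
    ring_nf

lemma abs_iteratedDeriv_inv_le (n : ℕ) (x : ℝ) (hx : 1 < x) :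
    |iteratedDeriv n (fun y : ℝ => y⁻¹) x| ≤ (n.factorial : ℝ) := by
  rw [iteratedDeriv_inv_eq n x (by linarith)]
  rw [abs_mul, abs_mul, abs_pow, abs_neg, abs_one, one_pow, one_mul, Nat.abs_cast]
  have h1 : |x ^ (-(n:ℤ)-1)| ≤ 1 := by
    rw [abs_of_pos (zpow_pos (by linarith : (0:ℝ) < x) _)]
    exact zpow_le_one_of_nonpos₀ hx.le (by omega)
  have h2 : (0:ℝ) < (n.factorial : ℝ) := by exact_mod_cast Nat.factorial_pos n
  nlinarith [abs_nonneg (x ^ (-(n:ℤ)-1))]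


lemma bridge' (n : ℕ) (f : ℝ → ℝ) {x : ℝ} (hx : x ∈ Set.Ioi (0:ℝ)) :
    iteratedDerivWithin n f (Set.Ioi 0) x = iteratedDeriv n f x := by
  rw [iteratedDerivWithin_eq_iteratedFDerivWithin, iteratedDeriv_eq_iteratedFDeriv,
    iteratedFDerivWithin_of_isOpen n isOpen_Ioi hx]

/-- The induction step : bound on the (n+2)-nd derivative from the lower ones. -/
lemma step (hsm : ContDiffOn ℝ (⊤:ℕ∞) q (Set.Ioi 0))
    (hODE : ∀ x : ℝ, 0 < x → deriv (deriv q) x = q x - (q x) ^ 3 - deriv q x / x)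
    (n : ℕ) (Cs : ℕ → ℝ) (hCpos : ∀ m, m ≤ n+1 → 0 < Cs m)
    (hCs : ∀ m, m ≤ n+1 → ∀ r : ℝ, 1 < r →
      |iteratedDeriv m q r| ≤ Cs m * (Real.sqrt r)⁻¹ * Real.exp (-r)) :
    ∃ C : ℝ, 0 < C ∧ ∀ r : ℝ, 1 < r →
      |iteratedDeriv (n+2) q r| ≤ C * (Real.sqrt r)⁻¹ * Real.exp (-r) := by
  classical
  set s : Set ℝ := Set.Ioi 0 with hsdef
  have hsu : UniqueDiffOn ℝ s := isOpen_Ioi.uniqueDiffOn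
  have hNle : ∀ m : ℕ, (m : WithTop ℕ∞) ≤ ((⊤:ℕ∞) : WithTop ℕ∞) := by
    intro m; exact_mod_cast le_top
  have cd1 : ContDiffOn ℝ (⊤:ℕ∞) (deriv q) s := hsm.deriv_of_isOpen isOpen_Ioi (by simp)
  have cdinv : ContDiffOn ℝ (⊤:ℕ∞) (fun y : ℝ => y⁻¹) s :=
    ContDiffOn.mono (contDiffOn_inv ℝ) (fun x hx => by simpa using ne_of_gt hx)
  have cdq2 : ContDiffOn ℝ (⊤:ℕ∞) (fun t => q t * q t) s := hsm.mul hsm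
  have cdq3 : ContDiffOn ℝ (⊤:ℕ∞) (fun t => q t * (q t * q t)) s := hsm.mul cdq2
  have cdquot : ContDiffOn ℝ (⊤:ℕ∞) (fun t => deriv q t * t⁻¹) s := cd1.mul cdinv
  -- constants
  set Ej : ℕ → ℝ := fun j => ∑ k ∈ Finset.range (j+1), (j.choose k : ℝ) * Cs k * Cs (j-k)
    with hEjdef
  set cubeC : ℝ := ∑ i ∈ Finset.range (n+1), (n.choose i : ℝ) * Cs i * Ej (n-i) with hcubeCdef
  set quotC : ℝ := ∑ i ∈ Finset.range (n+1),
    (n.choose i : ℝ) * Cs (i+1) * ((n-i).factorial : ℝ) with hquotCdef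
  have hEj0 : ∀ j, j ≤ n → 0 ≤ Ej j := by
    intro j hj
    apply Finset.sum_nonneg
    intro k hk
    have hk' : k ≤ j := Nat.lt_succ_iff.1 (Finset.mem_range.1 hk)
    have h1 := hCpos k (by omega)
    have h2 := hCpos (j-k) (by omega)
    positivity
  have hcubeC0 : 0 ≤ cubeC := by
    apply Finset.sum_nonneg
    intro i hi
    have hi' : i ≤ n := Nat.lt_succ_iff.1 (Finset.mem_range.1 hi)
    have h1 := hCpos i (by omega)
    have h2 := hEj0 (n-i) (by omega)
    positivity
  have hquotC0 : 0 ≤ quotC := by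
    apply Finset.sum_nonneg
    intro i hi
    have hi' : i ≤ n := Nat.lt_succ_iff.1 (Finset.mem_range.1 hi)
    have h1 := hCpos (i+1) (by omega)
    positivity
  refine ⟨Cs n + cubeC + quotC + 1, by
    have := hCpos n (by omega); linarith, fun r hr => ?_⟩
  have hrs : r ∈ s := Set.mem_Ioi.2 (by linarith)
  have hr0 : (0:ℝ) < r := by linarith
  have hsq1 : 1 ≤ Real.sqrt r := by
    rw [show (1:ℝ) = Real.sqrt 1 from (Real.sqrt_one).symm]
    exact Real.sqrt_le_sqrt (by linarith)
  have hsqinv : (Real.sqrt r)⁻¹ ≤ 1 := inv_le_one_of_one_le₀ hsq1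
  have hsqinv0 : 0 ≤ (Real.sqrt r)⁻¹ := by positivity
  obtain ⟨X, hXdef⟩ : ∃ X : ℝ, X = (Real.sqrt r)⁻¹ * Real.exp (-r) := ⟨_, rfl⟩
  have hexp1 : Real.exp (-r) ≤ 1 := Real.exp_le_one_iff.2 (by linarith)
  have hexp0 : 0 ≤ Real.exp (-r) := (Real.exp_pos _).le
  have hX0 : 0 ≤ X := by rw [hXdef]; positivity
  have hX1 : X ≤ 1 := by rw [hXdef]; nlinarith
  -- rewrite the (n+2)-nd derivative via the ODE
  have e1 : iteratedDeriv (n+2) q r = iteratedDeriv n (deriv (deriv q)) r := by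
    rw [show n+2 = (n+1)+1 by omega, iteratedDeriv_succ', iteratedDeriv_succ']
  have e2 : iteratedDeriv n (deriv (deriv q)) r
      = iteratedDeriv n (fun t => q t - q t * (q t * q t) - deriv q t * t⁻¹) r := by
    apply Set.EqOn.iteratedDeriv_of_isOpen _ isOpen_Ioi n hrs
    intro x hx
    rw [hODE x hx]
    rw [div_eq_mul_inv]
    ring
  -- split into three pieces
  have e3 : iteratedDerivWithin n (fun t => q t - q t * (q t * q t) - deriv q t * t⁻¹) s r
      = iteratedDerivWithin n q s r - iteratedDerivWithin n (fun t => q t * (q t * q t)) s r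
        - iteratedDerivWithin n (fun t => deriv q t * t⁻¹) s r := by
    have h1 : (fun t => q t - q t * (q t * q t) - deriv q t * t⁻¹)
        = ((fun t => q t - q t * (q t * q t)) - fun t => deriv q t * t⁻¹) := rfl
    rw [h1, iteratedDerivWithin_sub hrs hsu ((hsm.sub cdq3).of_le (hNle n) r hrs)
      (cdquot.of_le (hNle n) r hrs)]
    have h2 : (fun t => q t - q t * (q t * q t))
        = (q - fun t => q t * (q t * q t)) := rfl
    rw [h2, iteratedDerivWithin_sub hrs hsu (hsm.of_le (hNle n) r hrs) (cdq3.of_le (hNle n) r hrs)]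
  -- bounds on individual pieces
  have hbq : ∀ m, m ≤ n+1 → ‖iteratedFDerivWithin ℝ m q s r‖
      ≤ Cs m * X := by
    intro m hm
    rw [norm_bridge m q hrs]
    calc |iteratedDeriv m q r| ≤ Cs m * (Real.sqrt r)⁻¹ * Real.exp (-r) := hCs m hm r hr
      _ = Cs m * X := by rw [hXdef]; ring
  have hbq' : ∀ m, m ≤ n+1 → ‖iteratedFDerivWithin ℝ m q s r‖ ≤ Cs m := by
    intro m hm
    refine le_trans (hbq m hm) ?_
    have h1 := (hCpos m hm).le
    nlinarith
  -- inner product bound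
  have hbq2 : ∀ j, j ≤ n → ‖iteratedFDerivWithin ℝ j (fun t => q t * q t) s r‖ ≤ Ej j := by
    intro j hj
    refine le_trans (norm_iteratedFDerivWithin_mul_le hsm hsm hsu hrs (hNle j)) ?_
    apply Finset.sum_le_sum
    intro k hk
    have hk' : k ≤ j := Nat.lt_succ_iff.1 (Finset.mem_range.1 hk)
    have h1 := hbq' k (by omega)
    have h2 := hbq' (j-k) (by omega)
    have h3 : (0:ℝ) ≤ (j.choose k : ℝ) := by positivity
    have h4 : 0 ≤ ‖iteratedFDerivWithin ℝ k q s r‖ := norm_nonneg _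
    have h5 : 0 ≤ ‖iteratedFDerivWithin ℝ (j-k) q s r‖ := norm_nonneg _
    have h6 := (hCpos k (by omega)).le
    exact mul_le_mul (mul_le_mul_of_nonneg_left h1 h3) h2 h5
      (mul_nonneg h3 h6)
  -- cube bound
  have hcube : ‖iteratedFDerivWithin ℝ n (fun t => q t * (q t * q t)) s r‖
      ≤ cubeC * X := by
    refine le_trans (norm_iteratedFDerivWithin_mul_le hsm cdq2 hsu hrs (hNle n)) ?_
    rw [hcubeCdef, Finset.sum_mul]
    apply Finset.sum_le_sum
    intro i hi
    have hi' : i ≤ n := Nat.lt_succ_iff.1 (Finset.mem_range.1 hi)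
    have h1 := hbq i (by omega)
    have h2 := hbq2 (n-i) (by omega)
    have h3 : (0:ℝ) ≤ (n.choose i : ℝ) := by positivity
    have h4 : 0 ≤ ‖iteratedFDerivWithin ℝ i q s r‖ := norm_nonneg _
    have h5 : 0 ≤ ‖iteratedFDerivWithin ℝ (n-i) (fun t => q t * q t) s r‖ := norm_nonneg _
    have h6 := (hCpos i (by omega)).le
    have h7 := hEj0 (n-i) (by omega)
    calc (n.choose i : ℝ) * ‖iteratedFDerivWithin ℝ i q s r‖
        * ‖iteratedFDerivWithin ℝ (n-i) (fun t => q t * q t) s r‖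
        ≤ (n.choose i : ℝ) * (Cs i * X) * Ej (n-i) :=
          mul_le_mul (mul_le_mul_of_nonneg_left h1 h3) h2 h5
            (mul_nonneg h3 (mul_nonneg h6 hX0))
      _ = (n.choose i : ℝ) * Cs i * Ej (n-i) * X := by ring
  -- quotient bound
  have hquot : ‖iteratedFDerivWithin ℝ n (fun t => deriv q t * t⁻¹) s r‖
      ≤ quotC * X := by
    refine le_trans (norm_iteratedFDerivWithin_mul_le cd1 cdinv hsu hrs (hNle n)) ?_
    rw [hquotCdef, Finset.sum_mul]
    apply Finset.sum_le_sum
    intro i hi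
    have hi' : i ≤ n := Nat.lt_succ_iff.1 (Finset.mem_range.1 hi)
    have h1 : ‖iteratedFDerivWithin ℝ i (deriv q) s r‖
        ≤ Cs (i+1) * X := by
      rw [norm_bridge i (deriv q) hrs, ← iteratedDeriv_succ']
      calc |iteratedDeriv (i+1) q r| ≤ Cs (i+1) * (Real.sqrt r)⁻¹ * Real.exp (-r) :=
            hCs (i+1) (by omega) r hr
        _ = Cs (i+1) * X := by rw [hXdef]; ring
    have h2 : ‖iteratedFDerivWithin ℝ (n-i) (fun y : ℝ => y⁻¹) s r‖ ≤ ((n-i).factorial : ℝ) := by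
      rw [norm_bridge (n-i) _ hrs]
      exact abs_iteratedDeriv_inv_le (n-i) r hr
    have h3 : (0:ℝ) ≤ (n.choose i : ℝ) := by positivity
    have h4 : 0 ≤ ‖iteratedFDerivWithin ℝ i (deriv q) s r‖ := norm_nonneg _
    have h5 : 0 ≤ ‖iteratedFDerivWithin ℝ (n-i) (fun y : ℝ => y⁻¹) s r‖ := norm_nonneg _
    have h6 := (hCpos (i+1) (by omega)).le
    have h7 : (0:ℝ) ≤ ((n-i).factorial : ℝ) := by positivity
    calc (n.choose i : ℝ) * ‖iteratedFDerivWithin ℝ i (deriv q) s r‖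
        * ‖iteratedFDerivWithin ℝ (n-i) (fun y : ℝ => y⁻¹) s r‖
        ≤ (n.choose i : ℝ) * (Cs (i+1) * X) * ((n-i).factorial : ℝ) :=
          mul_le_mul (mul_le_mul_of_nonneg_left h1 h3) h2 h5
            (mul_nonneg h3 (mul_nonneg h6 hX0))
      _ = (n.choose i : ℝ) * Cs (i+1) * ((n-i).factorial : ℝ) * X := by ring
  -- assemble
  have hq_n := hbq n (by omega)
  rw [norm_bridge n q hrs] at hq_n
  rw [norm_bridge n _ hrs] at hcube hquot
  rw [e1, e2, ← bridge' n _ hrs, e3]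
  rw [bridge' n q hrs, bridge' n _ hrs, bridge' n _ hrs]
  have htri : |iteratedDeriv n q r - iteratedDeriv n (fun t => q t * (q t * q t)) r
      - iteratedDeriv n (fun t => deriv q t * t⁻¹) r|
      ≤ |iteratedDeriv n q r| + |iteratedDeriv n (fun t => q t * (q t * q t)) r|
        + |iteratedDeriv n (fun t => deriv q t * t⁻¹) r| := by
    calc _ ≤ |iteratedDeriv n q r - iteratedDeriv n (fun t => q t * (q t * q t)) r|
          + |iteratedDeriv n (fun t => deriv q t * t⁻¹) r| := abs_sub _ _
      _ ≤ _ := by gcongr; exact abs_sub _ _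
  refine le_trans htri ?_
  have hfin : (Cs n + cubeC + quotC + 1) * (Real.sqrt r)⁻¹ * Real.exp (-r)
      = (Cs n + cubeC + quotC + 1) * X := by rw [hXdef]; ring
  rw [hfin]
  nlinarith [hq_n, hcube, hquot, hX0]


/-- extension of a tail bound over the compact piece `[1, R₀]`. -/
lemma extend {f : ℝ → ℝ} {R₀ C : ℝ} (hR₀ : 2 ≤ R₀)
    (hf : ContinuousOn f (Set.Icc 1 R₀)) (hC : 0 < C)
    (h : ∀ r, R₀ ≤ r → |f r| ≤ C * (Real.sqrt r)⁻¹ * Real.exp (-r)) :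
    ∃ C' : ℝ, 0 < C' ∧ ∀ r : ℝ, 1 < r → |f r| ≤ C' * (Real.sqrt r)⁻¹ * Real.exp (-r) := by
  obtain ⟨M, hM⟩ := (isCompact_Icc).exists_bound_of_continuousOn hf
  obtain ⟨m, hmdef⟩ : ∃ m : ℝ, m = (Real.sqrt R₀)⁻¹ * Real.exp (-R₀) := ⟨_, rfl⟩
  have hR₀0 : (0:ℝ) < R₀ := by linarith
  have hm0 : 0 < m := by rw [hmdef]; positivity
  obtain ⟨C', hC'def⟩ : ∃ C' : ℝ, C' = max C ((|M|+1)/m) := ⟨_, rfl⟩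
  have hC'1 : C ≤ C' := hC'def ▸ le_max_left _ _
  have hC'2 : (|M|+1)/m ≤ C' := hC'def ▸ le_max_right _ _
  have hC'0 : 0 < C' := lt_of_lt_of_le hC hC'1
  refine ⟨C', hC'0, fun r hr => ?_⟩
  have hr0 : (0:ℝ) < r := by linarith
  have hsq0 : 0 < Real.sqrt r := Real.sqrt_pos.2 hr0
  rcases le_or_gt R₀ r with hcase | hcase
  · calc |f r| ≤ C * (Real.sqrt r)⁻¹ * Real.exp (-r) := h r hcase
      _ ≤ C' * (Real.sqrt r)⁻¹ * Real.exp (-r) := by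
          have h1 : (0:ℝ) ≤ (Real.sqrt r)⁻¹ * Real.exp (-r) := by positivity
          nlinarith
  · have hmem : r ∈ Set.Icc 1 R₀ := ⟨hr.le, hcase.le⟩
    have h1 : |f r| ≤ |M| := le_trans (hM r hmem) (le_abs_self M)
    have h2 : m ≤ (Real.sqrt r)⁻¹ * Real.exp (-r) := by
      rw [hmdef]
      have h3 : Real.sqrt r ≤ Real.sqrt R₀ := Real.sqrt_le_sqrt hcase.le
      have h4 : (Real.sqrt R₀)⁻¹ ≤ (Real.sqrt r)⁻¹ := by
        apply inv_anti₀ hsq0 h3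
      have h5 : Real.exp (-R₀) ≤ Real.exp (-r) := Real.exp_le_exp.2 (by linarith)
      have h6 : 0 < (Real.sqrt R₀)⁻¹ := by positivity
      nlinarith [Real.exp_pos (-R₀), Real.exp_pos (-r)]
    have h7 : (|M|+1)/m * m ≤ C' * m := mul_le_mul_of_nonneg_right hC'2 hm0.le
    rw [div_mul_cancel₀ _ (ne_of_gt hm0)] at h7
    have h8 : C' * m ≤ C' * ((Real.sqrt r)⁻¹ * Real.exp (-r)) :=
      mul_le_mul_of_nonneg_left h2 hC'0.le
    calc |f r| ≤ |M| := h1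
      _ ≤ C' * ((Real.sqrt r)⁻¹ * Real.exp (-r)) := by linarith
      _ = C' * (Real.sqrt r)⁻¹ * Real.exp (-r) := by ring

/-- continuity of the iterated derivatives on `(0,∞)`. -/
lemma cont_iteratedDeriv (hsm : ContDiffOn ℝ (⊤:ℕ∞) q (Set.Ioi 0)) (n : ℕ) :
    ContinuousOn (iteratedDeriv n q) (Set.Ioi 0) := by
  have h1 : ContinuousOn (iteratedDerivWithin n q (Set.Ioi 0)) (Set.Ioi 0) :=
    hsm.continuousOn_iteratedDerivWithin (by exact_mod_cast le_top) isOpen_Ioi.uniqueDiffOn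
  exact h1.congr (fun x hx => (bridge' n q hx).symm)

theorem main
    (hsmooth : ContDiffOn ℝ (⊤ : ℕ∞) q (Set.Ici 0))
    (hpos : ∀ r : ℝ, 0 ≤ r → 0 < q r)
    (hlim : Tendsto q atTop (nhds 0))
    (hODE : ∀ r : ℝ, 0 < r →
      -(deriv (deriv q) r) - deriv q r / r + q r - (q r) ^ 3 = 0) :
    ∀ n : ℕ, ∃ C > (0 : ℝ), ∀ r : ℝ, 1 < r →
      |iteratedDeriv n q r| ≤ C * r ^ (-(1 : ℝ) / 2) * Real.exp (-r) := by
  have hsm : ContDiffOn ℝ (⊤:ℕ∞) q (Set.Ioi 0) :=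
    (hsmooth.of_le (by simp)).mono Set.Ioi_subset_Ici_self
  have hODE' : ∀ x : ℝ, 0 < x → deriv (deriv q) x = q x - (q x) ^ 3 - deriv q x / x := by
    intro x hx
    have := hODE x hx
    linarith
  obtain ⟨R₀, hR₀2, C₂, hC₂0, hcore⟩ := core hsm hpos hlim hODE'
  -- the auxiliary statement with (√r)⁻¹
  have key : ∀ n : ℕ, ∃ C : ℝ, 0 < C ∧ ∀ r : ℝ, 1 < r →
      |iteratedDeriv n q r| ≤ C * (Real.sqrt r)⁻¹ * Real.exp (-r) := by
    intro n
    induction n using Nat.strong_induction_on with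
    | _ n ih =>
      match n with
      | 0 =>
        -- tail bound for q itself
        have htail : ∀ r, R₀ ≤ r → |iteratedDeriv 0 q r| ≤ C₂ * (Real.sqrt r)⁻¹ * Real.exp (-r) := by
          intro r hrr
          have hr0 : (0:ℝ) < r := by linarith
          have hsq0 : 0 < Real.sqrt r := Real.sqrt_pos.2 hr0
          have h1 : uu q r ≤ C₂ * Real.exp (-r) := (hcore r hrr).1
          have h2 : Real.sqrt r * q r ≤ C₂ * Real.exp (-r) := h1
          have hq0 : 0 < q r := hpos r hr0.le
          rw [iteratedDeriv_zero, abs_of_pos hq0,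
            show C₂ * (Real.sqrt r)⁻¹ * Real.exp (-r)
              = (C₂ * Real.exp (-r)) * (Real.sqrt r)⁻¹ by ring,
            ← div_eq_mul_inv, le_div_iff₀ hsq0]
          nlinarith
        have hcont : ContinuousOn (iteratedDeriv 0 q) (Set.Icc 1 R₀) :=
          (cont_iteratedDeriv hsm 0).mono (fun x hx => Set.mem_Ioi.2 (by
            have := hx.1; linarith))
        exact extend hR₀2 hcont hC₂0 htail
      | 1 =>
        have htail : ∀ r, R₀ ≤ r →
            |iteratedDeriv 1 q r| ≤ (2*C₂) * (Real.sqrt r)⁻¹ * Real.exp (-r) := by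
          intro r hrr
          have hr0 : (0:ℝ) < r := by linarith
          have hr2 : (2:ℝ) ≤ r := le_trans hR₀2 hrr
          have hsq0 : 0 < Real.sqrt r := Real.sqrt_pos.2 hr0
          have hq0 : 0 < q r := hpos r hr0.le
          have hU1 : |uu1 q r| ≤ uu q r := (hcore r hrr).2
          have hU : uu q r ≤ C₂ * Real.exp (-r) := (hcore r hrr).1
          have h1 : Real.sqrt r * deriv q r = uu1 q r - 1/(2*Real.sqrt r) * q r := by
            simp only [uu1]; ring
          have hsqr : Real.sqrt r ^ 2 = r := Real.sq_sqrt hr0.le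
          have h3 : 1/(2*Real.sqrt r) * q r ≤ uu q r := by
            have huu : uu q r = Real.sqrt r * q r := rfl
            rw [huu]
            rw [div_mul_eq_mul_div, one_mul, div_le_iff₀ (by positivity)]
            nlinarith
          have h4 : |Real.sqrt r * deriv q r| ≤ 2 * uu q r := by
            rw [h1]
            calc |uu1 q r - 1/(2*Real.sqrt r) * q r|
                ≤ |uu1 q r| + |1/(2*Real.sqrt r) * q r| := abs_sub _ _
              _ ≤ uu q r + uu q r := by
                  have h5 : |1/(2*Real.sqrt r) * q r| = 1/(2*Real.sqrt r) * q r :=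
                    abs_of_pos (by positivity)
                  rw [h5]
                  linarith
              _ = 2 * uu q r := by ring
          rw [iteratedDeriv_one,
            show (2*C₂) * (Real.sqrt r)⁻¹ * Real.exp (-r)
              = (2*(C₂ * Real.exp (-r))) * (Real.sqrt r)⁻¹ by ring,
            ← div_eq_mul_inv, le_div_iff₀ hsq0]
          have h6 : |deriv q r| * Real.sqrt r = |Real.sqrt r * deriv q r| := by
            rw [abs_mul, abs_of_pos hsq0]; ring
          rw [h6]
          nlinarith
        have hcont : ContinuousOn (iteratedDeriv 1 q) (Set.Icc 1 R₀) :=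
          (cont_iteratedDeriv hsm 1).mono (fun x hx => Set.mem_Ioi.2 (by
            have := hx.1; linarith))
        exact extend hR₀2 hcont (by linarith) htail
      | (n+2) =>
        have H : ∀ m : ℕ, ∃ C : ℝ, m ≤ n+1 → 0 < C ∧ ∀ r : ℝ, 1 < r →
            |iteratedDeriv m q r| ≤ C * (Real.sqrt r)⁻¹ * Real.exp (-r) := by
          intro m
          rcases Nat.lt_or_ge m (n+2) with hm | hm
          · obtain ⟨C, hC0, hC⟩ := ih m hm
            exact ⟨C, fun _ => ⟨hC0, hC⟩⟩
          · exact ⟨1, fun h => absurd h (by omega)⟩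
        choose Cs hCs using H
        obtain ⟨C, hC0, hC⟩ := step hsm hODE' n Cs
          (fun m hm => (hCs m hm).1) (fun m hm => (hCs m hm).2)
        exact ⟨C, hC0, hC⟩
  intro n
  obtain ⟨C, hC0, hC⟩ := key n
  refine ⟨C, hC0, fun r hr => ?_⟩
  have hr0 : (0:ℝ) < r := by linarith
  have hconv : r ^ (-(1:ℝ)/2) = (Real.sqrt r)⁻¹ := by
    rw [show (-(1:ℝ)/2) = -(1/2 : ℝ) by norm_num, Real.rpow_neg hr0.le,
      ← Real.sqrt_eq_rpow]
  rw [hconv]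
  exact hC r hr


end GSDecay

/-- **Exponential decay of the ground state profile**: if `q` is the positive, smooth,
decaying solution of the radial ODE `−q'' − q'/r + q − q³ = 0` on `(0,∞)` with `q'(0) = 0`,
then for every `n ∈ ℕ` there is `C_n > 0` with `|q^{(n)}(r)| ≤ C_n r^{−1/2} e^{−r}` for
all `r > 1`. -/
theorem ground_state_profile_exponential_decay
    (q : ℝ → ℝ)
    (hsmooth : ContDiffOn ℝ (⊤ : ℕ∞) q (Set.Ici 0))
    (hpos : ∀ r : ℝ, 0 ≤ r → 0 < q r)
    (hq'0 : derivWithin q (Set.Ici 0) 0 = 0)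
    (hlim : Tendsto q atTop (nhds 0))
    (hODE : ∀ r : ℝ, 0 < r →
      -(deriv (deriv q) r) - deriv q r / r + q r - (q r) ^ 3 = 0) :
    ∀ n : ℕ, ∃ C > (0 : ℝ), ∀ r : ℝ, 1 < r →
      |iteratedDeriv n q r| ≤ C * r ^ (-(1 : ℝ) / 2) * Real.exp (-r) := by
  exact GSDecay.main hsmooth hpos hlim hODE
end
end

section
/- Virial identity for the localized mass (Step 1 of the proof of the mass-monotonicity Lemma): let φ : [0,t₀] × ℝ² → ℝ be a smooth solution of ∂_t φ + ∂_{x₁}(Δφ + φ³) = 0 such that φ(t,·) and all its spatial derivatives decay rapidly at spatial infinity (uniformly on [0,t₀]). Let ψ ∈ C³(ℝ) with ψ, ψ', ψ'', ψ''' bounded, and let ρ ∈ C¹([0,t₀]). Then for every t ∈ [0,t₀]: d/dt ∫_{ℝ²} φ(t,x)² ψ(x₁ − ρ(t)) dx = − ∫_{ℝ²} ( 3(∂_{x₁}φ)² + (∂_{x₂}φ)² ) ψ'(x₁ − ρ(t)) dx + ∫_{ℝ²} φ² ψ'''(x₁ − ρ(t)) dx − ρ'(t) ∫_{ℝ²}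 φ² ψ'(x₁ − ρ(t)) dx + (3/2) ∫_{ℝ²} φ⁴ ψ'(x₁ − ρ(t)) dx. -/
open MeasureTheory Real Filter Set
open scoped ENNReal

noncomputable section

/-- First partial derivative in the `y₁` direction. -/
def p1 (f : ℝ × ℝ → ℝ) : ℝ × ℝ → ℝ := fun p => fderiv ℝ f p (1, 0)

/-- First partial derivative in the `y₂` direction. -/
def p2 (f : ℝ × ℝ → ℝ) : ℝ × ℝ → ℝ := fun p => fderiv ℝ f p (0, 1)

/-- Mixed partial derivative `∂₁^m ∂₂^n f`. -/
def pmix (m n : ℕ) (f : ℝ × ℝ → ℝ) : ℝ × ℝ → ℝ := p1^[m] (p2^[n] f)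

/-- Laplacian. -/
def lap (f : ℝ × ℝ → ℝ) : ℝ × ℝ → ℝ := fun p => p1 (p1 f) p + p2 (p2 f) p

/-- Squared length of the gradient. -/
def gradSq (f : ℝ × ℝ → ℝ) : ℝ × ℝ → ℝ := fun p => (p1 f p) ^ 2 + (p2 f p) ^ 2

/-- Energy functional. -/
def energy (f : ℝ × ℝ → ℝ) : ℝ :=
  ∫ p : ℝ × ℝ, ((1 : ℝ) / 2 * gradSq f p - 1 / 4 * (f p) ^ 4)

/-- Membership in `H¹(ℝ²)`. -/
def H1 (f : ℝ × ℝ → ℝ) : Prop :=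
  MemLp f 2 volume ∧ MemLp (p1 f) 2 volume ∧ MemLp (p2 f) 2 volume

/-- Scaling generator `Λf = f + y·∇f`. -/
def Lam (f : ℝ × ℝ → ℝ) : ℝ × ℝ → ℝ := fun p => f p + p.1 * p1 f p + p.2 * p2 f p

/-- Linearized operator `L f = -Δf + f - 3Q²f`. -/
def Lop (Q f : ℝ × ℝ → ℝ) : ℝ × ℝ → ℝ :=
  fun p => -lap f p + f p - 3 * (Q p) ^ 2 * f p

/-- `Q` is the ground state of the 2D cubic Zakharov–Kuznetsov equation. -/
def GroundState (Q : ℝ × ℝ → ℝ) : Prop :=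
  ContDiff ℝ (⊤ : ℕ∞) Q ∧ (∀ p, 0 < Q p) ∧ (∀ p q : ℝ × ℝ, ‖p‖ = ‖q‖ → Q p = Q q) ∧
    (∀ p, lap Q p - Q p + (Q p) ^ 3 = 0) ∧ Tendsto Q (cocompact (ℝ × ℝ)) (nhds 0)

/-- `Q` and all derivatives decay like `e^{-|y|}` up to polynomial factors. -/
def QDecay (Q : ℝ × ℝ → ℝ) : Prop :=
  ∀ m n : ℕ, ∃ C > (0 : ℝ), ∃ r : ℕ, ∀ p : ℝ × ℝ,
    |pmix m n Q p| ≤ C * (1 + ‖p‖) ^ r * Real.exp (-‖p‖)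


open Topology

namespace VirialAux

/-! ### Pointwise partial-derivative calculus -/

lemma p1_of_hasFDerivAt {f : ℝ×ℝ→ℝ} {p : ℝ×ℝ} {L : (ℝ×ℝ) →L[ℝ] ℝ} (h : HasFDerivAt f L p) :
    p1 f p = L (1,0) := by rw [p1, h.fderiv]
lemma p2_of_hasFDerivAt {f : ℝ×ℝ→ℝ} {p : ℝ×ℝ} {L : (ℝ×ℝ) →L[ℝ] ℝ} (h : HasFDerivAt f L p) :
    p2 f p = L (0,1) := by rw [p2, h.fderiv]
lemma p1_add {f g : ℝ×ℝ→ℝ} {p} (hf : DifferentiableAt ℝ f p) (hg : DifferentiableAt ℝ g p) :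
    p1 (fun z => f z + g z) p = p1 f p + p1 g p := by simp [p1, fderiv_fun_add hf hg]
lemma p2_add {f g : ℝ×ℝ→ℝ} {p} (hf : DifferentiableAt ℝ f p) (hg : DifferentiableAt ℝ g p) :
    p2 (fun z => f z + g z) p = p2 f p + p2 g p := by simp [p2, fderiv_fun_add hf hg]
lemma p1_sub {f g : ℝ×ℝ→ℝ} {p} (hf : DifferentiableAt ℝ f p) (hg : DifferentiableAt ℝ g p) :
    p1 (fun z => f z - g z) p = p1 f p - p1 g p := by simp [p1, fderiv_fun_sub hf hg]
lemma p2_sub {f g : ℝ×ℝ→ℝ} {p} (hf : DifferentiableAt ℝ f p) (hg : DifferentiableAt ℝ g p) :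
    p2 (fun z => f z - g z) p = p2 f p - p2 g p := by simp [p2, fderiv_fun_sub hf hg]
lemma p1_cmul {f : ℝ×ℝ→ℝ} {p} {c : ℝ} (hf : DifferentiableAt ℝ f p) :
    p1 (fun z => c * f z) p = c * p1 f p := by simp [p1, fderiv_const_mul hf]
lemma p2_cmul {f : ℝ×ℝ→ℝ} {p} {c : ℝ} (hf : DifferentiableAt ℝ f p) :
    p2 (fun z => c * f z) p = c * p2 f p := by simp [p2, fderiv_const_mul hf]
lemma p1_mul {f g : ℝ×ℝ→ℝ} {p} (hf : DifferentiableAt ℝ f p) (hg : DifferentiableAt ℝ g p) :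
    p1 (fun z => f z * g z) p = f p * p1 g p + g p * p1 f p := by simp [p1, fderiv_fun_mul hf hg]
lemma p2_mul {f g : ℝ×ℝ→ℝ} {p} (hf : DifferentiableAt ℝ f p) (hg : DifferentiableAt ℝ g p) :
    p2 (fun z => f z * g z) p = f p * p2 g p + g p * p2 f p := by simp [p2, fderiv_fun_mul hf hg]
lemma p1_mul3 {f g h : ℝ×ℝ→ℝ} {p} (hf : DifferentiableAt ℝ f p) (hg : DifferentiableAt ℝ g p)
    (hh : DifferentiableAt ℝ h p) :
    p1 (fun z => f z * g z * h z) p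
      = p1 f p * g p * h p + f p * p1 g p * h p + f p * g p * p1 h p := by
  rw [p1_mul (f := fun z => f z * g z) (hf.mul hg) hh, p1_mul hf hg]; ring
lemma p2_mul3 {f g h : ℝ×ℝ→ℝ} {p} (hf : DifferentiableAt ℝ f p) (hg : DifferentiableAt ℝ g p)
    (hh : DifferentiableAt ℝ h p) :
    p2 (fun z => f z * g z * h z) p
      = p2 f p * g p * h p + f p * p2 g p * h p + f p * g p * p2 h p := by
  rw [p2_mul (f := fun z => f z * g z) (hf.mul hg) hh, p2_mul hf hg]; ring
lemma p1_pow {f : ℝ×ℝ→ℝ} {p} (n : ℕ) (hf : DifferentiableAt ℝ f p) :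
    p1 (fun z => f z ^ n) p = n * f p ^ (n-1) * p1 f p := by
  have h := (hasDerivAt_pow n (f p)).comp_hasFDerivAt p hf.hasFDerivAt
  have h' : HasFDerivAt (fun z => f z ^ n) ((↑n * f p ^ (n - 1)) • fderiv ℝ f p) p := h
  rw [p1_of_hasFDerivAt h']
  simp [p1, mul_assoc]
lemma hasFDerivAt_comp_sub {g : ℝ → ℝ} {c : ℝ} {p : ℝ×ℝ} (hg : DifferentiableAt ℝ g (p.1 - c)) :
    HasFDerivAt (fun z : ℝ×ℝ => g (z.1 - c))
      (deriv g (p.1 - c) • ((ContinuousLinearMap.fst ℝ ℝ ℝ))) p := by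
  have h1 : HasFDerivAt (fun z : ℝ×ℝ => z.1 - c) (ContinuousLinearMap.fst ℝ ℝ ℝ) p :=
    (hasFDerivAt_fst).sub_const c
  exact hg.hasDerivAt.comp_hasFDerivAt p h1
lemma p1_comp_sub {g : ℝ → ℝ} {c : ℝ} {p : ℝ×ℝ} (hg : DifferentiableAt ℝ g (p.1 - c)) :
    p1 (fun z : ℝ×ℝ => g (z.1 - c)) p = deriv g (p.1 - c) := by
  rw [p1_of_hasFDerivAt (hasFDerivAt_comp_sub hg)]; simp
lemma p2_comp_sub {g : ℝ → ℝ} {c : ℝ} {p : ℝ×ℝ} (hg : DifferentiableAt ℝ g (p.1 - c)) :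
    p2 (fun z : ℝ×ℝ => g (z.1 - c)) p = 0 := by
  rw [p2_of_hasFDerivAt (hasFDerivAt_comp_sub hg)]; simp
lemma contDiff_p1 {f : ℝ×ℝ→ℝ} (hf : ContDiff ℝ (⊤ : ℕ∞) f) : ContDiff ℝ (⊤ : ℕ∞) (p1 f) :=
  (hf.fderiv_right ((by simp))).clm_apply contDiff_const
lemma contDiff_p2 {f : ℝ×ℝ→ℝ} (hf : ContDiff ℝ (⊤ : ℕ∞) f) : ContDiff ℝ (⊤ : ℕ∞) (p2 f) :=
  (hf.fderiv_right ((by simp))).clm_apply contDiff_const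
lemma p2_p1_comm {f : ℝ×ℝ→ℝ} (hf : ContDiff ℝ (⊤ : ℕ∞) f) (p : ℝ×ℝ) :
    p2 (p1 f) p = p1 (p2 f) p := by
  have hdf : Differentiable ℝ f := hf.differentiable (by simp)
  have hf' : ContDiff ℝ (⊤ : ℕ∞) (fderiv ℝ f) := hf.fderiv_right (by simp)
  have hf'd : DifferentiableAt ℝ (fderiv ℝ f) p := (hf'.differentiable (by simp)) p
  have hsym := second_derivative_symmetric (f := f) (f' := fderiv ℝ f)
      (fun y => (hdf y).hasFDerivAt) (hf'd.hasFDerivAt)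
  have e1 : ∀ v w : ℝ×ℝ, fderiv ℝ (fun q => fderiv ℝ f q v) p w
      = fderiv ℝ (fderiv ℝ f) p w v := by
    intro v w
    rw [fderiv_clm_apply hf'd (differentiableAt_const v)]
    simp
  show fderiv ℝ (fun q => fderiv ℝ f q (1,0)) p (0,1)
      = fderiv ℝ (fun q => fderiv ℝ f q (0,1)) p (1,0)
  rw [e1, e1, hsym]
lemma differentiable_comp_sub {g : ℝ → ℝ} {c : ℝ} (hg : Differentiable ℝ g) :
    Differentiable ℝ (fun z : ℝ×ℝ => g (z.1 - c)) :=
  hg.comp ((differentiable_fst).sub_const c)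

/-! ### Elementary bounds -/

lemma abs_mul3_le {a b c A B C : ℝ} (ha : |a| ≤ A) (hb : |b| ≤ B) (hc : |c| ≤ C) :
    |a * b * c| ≤ A * B * C := by
  have h0a := abs_nonneg a; have h0b := abs_nonneg b; have h0c := abs_nonneg c
  have hA : 0 ≤ A := le_trans h0a ha
  have hB : 0 ≤ B := le_trans h0b hb
  calc |a*b*c| = |a| * |b| * |c| := by rw [abs_mul, abs_mul]
    _ ≤ A*B*C := mul_le_mul (mul_le_mul ha hb h0b hA) hc h0c (mul_nonneg hA hB)

lemma abs_mul4_le {a b c d A B C D : ℝ} (ha : |a| ≤ A) (hb : |b| ≤ B) (hc : |c| ≤ C)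
    (hd : |d| ≤ D) : |a * b * c * d| ≤ A * B * C * D := by
  have h0d := abs_nonneg d
  have habc : |a*b*c| ≤ A*B*C := abs_mul3_le ha hb hc
  have hABC : 0 ≤ A*B*C := le_trans (abs_nonneg _) habc
  calc |a*b*c*d| = |a*b*c| * |d| := by rw [abs_mul]
    _ ≤ A*B*C*D := mul_le_mul habc hd h0d hABC

lemma abs_add6 {a b c d e f : ℝ} : |a+b+c+d+e+f| ≤ |a|+|b|+|c|+|d|+|e|+|f| := by
  calc |a+b+c+d+e+f| ≤ |a+b+c+d+e| + |f| := abs_add_le _ _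
    _ ≤ (|a+b+c+d| + |e|) + |f| := by gcongr; exact abs_add_le _ _
    _ ≤ ((|a+b+c| + |d|) + |e|) + |f| := by gcongr; exact abs_add_le _ _
    _ ≤ (((|a+b| + |c|) + |d|) + |e|) + |f| := by gcongr; exact abs_add_le _ _
    _ ≤ ((((|a|+|b|) + |c|) + |d|) + |e|) + |f| := by gcongr; exact abs_add_le _ _
    _ = |a|+|b|+|c|+|d|+|e|+|f| := by ring

/-! ### Integrability from decay -/

lemma integrable_of_decay {f : ℝ×ℝ→ℝ} (hc : Continuous f) {C : ℝ}
    (hb : ∀ p : ℝ×ℝ, |f p| ≤ C / (1+‖p‖)^3) : Integrable f := by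
  have h0 : Integrable (fun p : ℝ×ℝ => (1+‖p‖) ^ (-(3:ℝ))) :=
    integrable_one_add_norm (by
      norm_num [Module.finrank_prod, Module.finrank_self])
  refine (h0.const_mul C).mono' hc.aestronglyMeasurable ?_
  refine Eventually.of_forall (fun p => ?_)
  have hp : (0:ℝ) < 1 + ‖p‖ := by positivity
  have h1 : (1+‖p‖) ^ (-(3:ℝ)) = 1 / (1+‖p‖)^(3:ℕ) := by
    rw [rpow_neg hp.le, ← rpow_natCast (1+‖p‖) 3, one_div]; norm_num
  calc ‖f p‖ = |f p| := rfl
    _ ≤ C / (1+‖p‖)^3 := hb p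
    _ = C * (1+‖p‖) ^ (-(3:ℝ)) := by rw [h1]; ring

lemma integrable_of_decay1 {f : ℝ→ℝ} (hc : Continuous f) {C : ℝ}
    (hb : ∀ x : ℝ, |f x| ≤ C / (1+|x|)^3) : Integrable f := by
  have h0 : Integrable (fun x : ℝ => (1+‖x‖) ^ (-(3:ℝ))) :=
    integrable_one_add_norm (by norm_num)
  refine (h0.const_mul C).mono' hc.aestronglyMeasurable ?_
  refine Eventually.of_forall (fun x => ?_)
  have hp : (0:ℝ) < 1 + ‖x‖ := by positivity
  have h1 : (1+‖x‖) ^ (-(3:ℝ)) = 1 / (1+‖x‖)^(3:ℕ) := by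
    rw [rpow_neg hp.le, ← rpow_natCast (1+‖x‖) 3, one_div]; norm_num
  calc ‖f x‖ = |f x| := rfl
    _ ≤ C / (1+|x|)^3 := hb x
    _ = C * (1+‖x‖) ^ (-(3:ℝ)) := by rw [h1]; simp [Real.norm_eq_abs]; ring

lemma decay_slice_fst {C : ℝ} {f : ℝ×ℝ→ℝ} (hb : ∀ p : ℝ×ℝ, |f p| ≤ C / (1+‖p‖)^3)
    (b : ℝ) : ∀ s : ℝ, |f (s,b)| ≤ |C| / (1+|s|)^3 := by
  intro s
  have h2 : (1+|s|) ≤ 1 + ‖((s,b) : ℝ×ℝ)‖ := by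
    have : |s| ≤ ‖((s,b) : ℝ×ℝ)‖ := by
      simpa [Real.norm_eq_abs] using norm_fst_le ((s,b) : ℝ×ℝ)
    linarith
  calc |f (s,b)| ≤ C / (1+‖((s,b):ℝ×ℝ)‖)^3 := hb _
    _ ≤ |C| / (1+‖((s,b):ℝ×ℝ)‖)^3 := by
        gcongr
        exact le_abs_self C
    _ ≤ |C| / (1+|s|)^3 := by gcongr

lemma decay_slice_snd {C : ℝ} {f : ℝ×ℝ→ℝ} (hb : ∀ p : ℝ×ℝ, |f p| ≤ C / (1+‖p‖)^3)
    (a : ℝ) : ∀ s : ℝ, |f (a,s)| ≤ |C| / (1+|s|)^3 := by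
  intro s
  have h2 : (1+|s|) ≤ 1 + ‖((a,s) : ℝ×ℝ)‖ := by
    have : |s| ≤ ‖((a,s) : ℝ×ℝ)‖ := by
      simpa [Real.norm_eq_abs] using norm_snd_le ((a,s) : ℝ×ℝ)
    linarith
  calc |f (a,s)| ≤ C / (1+‖((a,s):ℝ×ℝ)‖)^3 := hb _
    _ ≤ |C| / (1+‖((a,s):ℝ×ℝ)‖)^3 := by
        gcongr
        exact le_abs_self C
    _ ≤ |C| / (1+|s|)^3 := by gcongr

/-! ### Vanishing integrals of partial derivatives -/

lemma integral_p1_eq_zero {A : ℝ×ℝ→ℝ} (hA : Differentiable ℝ A) {C C' : ℝ}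
    (hAc : Continuous A)
    (hdec : ∀ p : ℝ×ℝ, |A p| ≤ C/(1+‖p‖)^3) (hdec' : ∀ p : ℝ×ℝ, |p1 A p| ≤ C'/(1+‖p‖)^3)
    (hcont' : Continuous (p1 A)) : ∫ p : ℝ×ℝ, p1 A p = 0 := by
  have hint : Integrable (p1 A) := integrable_of_decay hcont' hdec'
  have hprod : Integrable (p1 A) ((volume : Measure ℝ).prod (volume : Measure ℝ)) := by
    rwa [← Measure.volume_eq_prod]
  rw [show (volume : Measure (ℝ×ℝ)) = (volume : Measure ℝ).prod volume from
    Measure.volume_eq_prod ℝ ℝ]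
  rw [MeasureTheory.integral_prod_symm _ hprod]
  have hz : ∀ b : ℝ, ∫ s : ℝ, p1 A (s, b) = 0 := by
    intro b
    apply integral_eq_zero_of_hasDerivAt_of_integrable (f := fun s => A (s, b))
    · intro s
      have hline : HasDerivAt (fun s : ℝ => ((s, b) : ℝ×ℝ)) ((1:ℝ), (0:ℝ)) s :=
        HasDerivAt.prodMk (hasDerivAt_id s) (hasDerivAt_const s b)
      exact (hA (s, b)).hasFDerivAt.comp_hasDerivAt s hline
    · exact integrable_of_decay1 (hcont'.comp (by continuity)) (decay_slice_fst hdec' b)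
    · exact integrable_of_decay1 (hAc.comp (by continuity)) (decay_slice_fst hdec b)
  simp [hz]

lemma integral_p2_eq_zero {B : ℝ×ℝ→ℝ} (hB : Differentiable ℝ B) {C C' : ℝ}
    (hBc : Continuous B)
    (hdec : ∀ p : ℝ×ℝ, |B p| ≤ C/(1+‖p‖)^3) (hdec' : ∀ p : ℝ×ℝ, |p2 B p| ≤ C'/(1+‖p‖)^3)
    (hcont' : Continuous (p2 B)) : ∫ p : ℝ×ℝ, p2 B p = 0 := by
  have hint : Integrable (p2 B) := integrable_of_decay hcont' hdec'
  have hprod : Integrable (p2 B) ((volume : Measure ℝ).prod (volume : Measure ℝ)) := by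
    rwa [← Measure.volume_eq_prod]
  rw [show (volume : Measure (ℝ×ℝ)) = (volume : Measure ℝ).prod volume from
    Measure.volume_eq_prod ℝ ℝ]
  rw [MeasureTheory.integral_prod _ hprod]
  have hz : ∀ a : ℝ, ∫ s : ℝ, p2 B (a, s) = 0 := by
    intro a
    apply integral_eq_zero_of_hasDerivAt_of_integrable (f := fun s => B (a, s))
    · intro s
      have hline : HasDerivAt (fun s : ℝ => ((a, s) : ℝ×ℝ)) ((0:ℝ), (1:ℝ)) s :=
        HasDerivAt.prodMk (hasDerivAt_const s a) (hasDerivAt_id s)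
      exact (hB (a, s)).hasFDerivAt.comp_hasDerivAt s hline
    · exact integrable_of_decay1 (hcont'.comp (by continuity)) (decay_slice_snd hdec' a)
    · exact integrable_of_decay1 (hBc.comp (by continuity)) (decay_slice_snd hdec a)
  simp [hz]

/-! ### Differentiation under the integral sign -/

lemma hasDerivWithinAt_integral
    {f f' : ℝ → (ℝ×ℝ) → ℝ} {s : Set ℝ} (hs : Convex ℝ s) {t : ℝ} (ht : t ∈ s)
    (hints : ∀ τ ∈ s, Integrable (f τ))
    (hderiv : ∀ τ ∈ s, ∀ x : ℝ×ℝ, HasDerivWithinAt (fun σ => f σ x) (f' τ x) s τ)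
    {G : (ℝ×ℝ) → ℝ} (hG : Integrable G)
    (hbound : ∀ τ ∈ s, ∀ x : ℝ×ℝ, |f' τ x| ≤ G x) :
    HasDerivWithinAt (fun τ => ∫ x : ℝ×ℝ, f τ x) (∫ x : ℝ×ℝ, f' t x) s t := by
  rw [hasDerivWithinAt_iff_tendsto_slope]
  have hl_mem : ∀ᶠ τ in 𝓝[s \ {t}] t, τ ∈ s \ {t} := eventually_mem_nhdsWithin
  have key : Tendsto (fun τ => ∫ x : ℝ×ℝ, slope (fun σ => f σ x) t τ) (𝓝[s \ {t}] t)
      (𝓝 (∫ x : ℝ×ℝ, f' t x)) := by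
    apply tendsto_integral_filter_of_dominated_convergence G
    · filter_upwards [hl_mem] with τ hτ
      have heq : (fun x : ℝ×ℝ => slope (fun σ => f σ x) t τ)
          = fun x => (τ - t)⁻¹ * (f τ x - f t x) := by
        funext x; rw [slope_def_field]; ring
      rw [heq]
      exact (((hints τ hτ.1).sub (hints t ht)).const_mul _).aestronglyMeasurable
    · filter_upwards [hl_mem] with τ hτ
      refine Eventually.of_forall (fun x => ?_)
      have hmvt : ‖f τ x - f t x‖ ≤ G x * ‖τ - t‖ :=
        Convex.norm_image_sub_le_of_norm_hasDerivWithin_le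
          (fun σ hσ => hderiv σ hσ x) (fun σ hσ => hbound σ hσ x) hs ht hτ.1
      have hτt : τ - t ≠ 0 := sub_ne_zero.mpr hτ.2
      have habs : (0:ℝ) < ‖τ - t‖ := by simpa using hτt
      rw [slope_def_field, norm_div, div_le_iff₀ habs]
      exact hmvt
    · exact hG
    · refine Eventually.of_forall (fun x => ?_)
      have h := hderiv t ht x
      rwa [hasDerivWithinAt_iff_tendsto_slope] at h
  refine key.congr' ?_
  filter_upwards [hl_mem] with τ hτ
  calc ∫ x : ℝ×ℝ, slope (fun σ => f σ x) t τ
      = ∫ x : ℝ×ℝ, (f τ x - f t x) / (τ - t) := by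
        congr 1; funext x; rw [slope_def_field]
    _ = (∫ x : ℝ×ℝ, (f τ x - f t x)) / (τ - t) := integral_div _ _
    _ = ((∫ x : ℝ×ℝ, f τ x) - ∫ x : ℝ×ℝ, f t x) / (τ - t) := by
        rw [integral_sub (hints τ hτ.1) (hints t ht)]
    _ = slope (fun τ => ∫ x : ℝ×ℝ, f τ x) t τ := by rw [slope_def_field]

/-! ### The flux functions -/

/-- The flux function in the `x₁` direction. -/
def Afun (u : ℝ×ℝ→ℝ) (g0 g1 g2 : ℝ→ℝ) (c : ℝ) : ℝ×ℝ→ℝ := fun z =>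
  2*(u z * p1 (p1 u) z * g0 (z.1-c)) - p1 u z * p1 u z * g0 (z.1-c)
  - 2*(u z * p1 u z * g1 (z.1-c)) + u z * u z * g2 (z.1-c)
  - p2 u z * p2 u z * g0 (z.1-c) + (3/2)*((u z * u z) * (u z * u z) * g0 (z.1-c))

/-- The flux function in the `x₂` direction. -/
def Bfun (u : ℝ×ℝ→ℝ) (g0 : ℝ→ℝ) (c : ℝ) : ℝ×ℝ→ℝ := fun z =>
  2*(u z * p1 (p2 u) z * g0 (z.1-c))

section AB
variable {u : ℝ×ℝ→ℝ} {g0 g1 g2 g3 : ℝ→ℝ} {c : ℝ}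

lemma differentiable_Afun (hu : ContDiff ℝ (⊤ : ℕ∞) u) (hg0 : Differentiable ℝ g0)
    (hg1 : Differentiable ℝ g1) (hg2 : Differentiable ℝ g2) :
    Differentiable ℝ (Afun u g0 g1 g2 c) := by
  have hud : Differentiable ℝ u := hu.differentiable (by simp)
  have hu1 : Differentiable ℝ (p1 u) := (contDiff_p1 hu).differentiable (by simp)
  have hu2 : Differentiable ℝ (p2 u) := (contDiff_p2 hu).differentiable (by simp)
  have hu11 : Differentiable ℝ (p1 (p1 u)) :=
    (contDiff_p1 (contDiff_p1 hu)).differentiable (by simp)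
  have hG0 := differentiable_comp_sub (c := c) hg0
  have hG1 := differentiable_comp_sub (c := c) hg1
  have hG2 := differentiable_comp_sub (c := c) hg2
  exact ((((((hud.mul hu11).mul hG0).const_mul 2).sub ((hu1.mul hu1).mul hG0)).sub
    (((hud.mul hu1).mul hG1).const_mul 2)).add ((hud.mul hud).mul hG2)).sub
    ((hu2.mul hu2).mul hG0) |>.add ((((hud.mul hud).mul (hud.mul hud)).mul hG0).const_mul (3/2))

lemma differentiable_Bfun (hu : ContDiff ℝ (⊤ : ℕ∞) u) (hg0 : Differentiable ℝ g0) :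
    Differentiable ℝ (Bfun u g0 c) := by
  have hud : Differentiable ℝ u := hu.differentiable (by simp)
  have hu12 : Differentiable ℝ (p1 (p2 u)) :=
    (contDiff_p1 (contDiff_p2 hu)).differentiable (by simp)
  exact (((hud.mul hu12).mul (differentiable_comp_sub hg0)).const_mul 2)

lemma p1_Afun (hu : ContDiff ℝ (⊤ : ℕ∞) u) (hg0 : Differentiable ℝ g0)
    (hg1 : Differentiable ℝ g1) (hg2 : Differentiable ℝ g2)
    (hd0 : deriv g0 = g1) (hd1 : deriv g1 = g2) (hd2 : deriv g2 = g3) (p : ℝ×ℝ) :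
    p1 (Afun u g0 g1 g2 c) p =
      2 * u p * p1 (p1 (p1 u)) p * g0 (p.1-c)
      - 2 * p2 u p * p1 (p2 u) p * g0 (p.1-c)
      + 6 * u p^3 * p1 u p * g0 (p.1-c)
      - (3 * (p1 u p)^2 + (p2 u p)^2) * g1 (p.1-c)
      + (3/2) * u p^4 * g1 (p.1-c)
      + u p^2 * g3 (p.1-c) := by
  have hud : Differentiable ℝ u := hu.differentiable (by simp)
  have hu1 : Differentiable ℝ (p1 u) := (contDiff_p1 hu).differentiable (by simp)
  have hu2 : Differentiable ℝ (p2 u) := (contDiff_p2 hu).differentiable (by simp)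
  have hu11 : Differentiable ℝ (p1 (p1 u)) :=
    (contDiff_p1 (contDiff_p1 hu)).differentiable (by simp)
  have hG0 := differentiable_comp_sub (c := c) hg0
  have hG1 := differentiable_comp_sub (c := c) hg1
  have hG2 := differentiable_comp_sub (c := c) hg2
  have d1 : DifferentiableAt ℝ (fun z => 2*(u z * p1 (p1 u) z * g0 (z.1-c))) p :=
    (((hud p).mul (hu11 p)).mul (hG0 p)).const_mul 2
  have d2 : DifferentiableAt ℝ (fun z => p1 u z * p1 u z * g0 (z.1-c)) p :=
    ((hu1 p).mul (hu1 p)).mul (hG0 p)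
  have d3 : DifferentiableAt ℝ (fun z => 2*(u z * p1 u z * g1 (z.1-c))) p :=
    (((hud p).mul (hu1 p)).mul (hG1 p)).const_mul 2
  have d4 : DifferentiableAt ℝ (fun z => u z * u z * g2 (z.1-c)) p :=
    ((hud p).mul (hud p)).mul (hG2 p)
  have d5 : DifferentiableAt ℝ (fun z => p2 u z * p2 u z * g0 (z.1-c)) p :=
    ((hu2 p).mul (hu2 p)).mul (hG0 p)
  have d6 : DifferentiableAt ℝ (fun z => (3/2)*((u z * u z) * (u z * u z) * g0 (z.1-c))) p :=
    ((((hud p).mul (hud p)).mul ((hud p).mul (hud p))).mul (hG0 p)).const_mul (3/2)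
  have e0 : p1 (fun z : ℝ×ℝ => g0 (z.1-c)) p = g1 (p.1-c) := by
    rw [p1_comp_sub (hg0 _), hd0]
  have e1 : p1 (fun z : ℝ×ℝ => g1 (z.1-c)) p = g2 (p.1-c) := by
    rw [p1_comp_sub (hg1 _), hd1]
  have e2 : p1 (fun z : ℝ×ℝ => g2 (z.1-c)) p = g3 (p.1-c) := by
    rw [p1_comp_sub (hg2 _), hd2]
  show p1 (fun z =>
      2*(u z * p1 (p1 u) z * g0 (z.1-c)) - p1 u z * p1 u z * g0 (z.1-c)
      - 2*(u z * p1 u z * g1 (z.1-c)) + u z * u z * g2 (z.1-c)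
      - p2 u z * p2 u z * g0 (z.1-c) + (3/2)*((u z * u z) * (u z * u z) * g0 (z.1-c))) p = _
  rw [p1_add ((((d1.fun_sub d2).fun_sub d3).fun_add d4).fun_sub d5) d6,
      p1_sub (((d1.fun_sub d2).fun_sub d3).fun_add d4) d5,
      p1_add ((d1.fun_sub d2).fun_sub d3) d4,
      p1_sub (d1.fun_sub d2) d3, p1_sub d1 d2,
      p1_cmul (((hud p).fun_mul (hu11 p)).fun_mul (hG0 p)),
      p1_cmul (((hud p).fun_mul (hu1 p)).fun_mul (hG1 p)),
      p1_cmul ((((hud p).fun_mul (hud p)).fun_mul ((hud p).fun_mul (hud p))).fun_mul (hG0 p)),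
      p1_mul3 (hud p) (hu11 p) (hG0 p),
      p1_mul3 (hu1 p) (hu1 p) (hG0 p),
      p1_mul3 (hud p) (hu1 p) (hG1 p),
      p1_mul3 (hud p) (hud p) (hG2 p),
      p1_mul3 (hu2 p) (hu2 p) (hG0 p),
      p1_mul3 ((hud p).fun_mul (hud p)) ((hud p).fun_mul (hud p)) (hG0 p),
      p1_mul (hud p) (hud p),
      e0, e1, e2]
  ring

lemma p2_Bfun (hu : ContDiff ℝ (⊤ : ℕ∞) u) (hg0 : Differentiable ℝ g0) (p : ℝ×ℝ) :
    p2 (Bfun u g0 c) p =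
      2 * p2 u p * p1 (p2 u) p * g0 (p.1-c) + 2 * u p * p1 (p2 (p2 u)) p * g0 (p.1-c) := by
  have hud : Differentiable ℝ u := hu.differentiable (by simp)
  have hu12d : Differentiable ℝ (p1 (p2 u)) :=
    (contDiff_p1 (contDiff_p2 hu)).differentiable (by simp)
  have hG0 := differentiable_comp_sub (c := c) hg0
  show p2 (fun z => 2*(u z * p1 (p2 u) z * g0 (z.1-c))) p = _
  rw [p2_cmul (((hud p).fun_mul (hu12d p)).fun_mul (hG0 p)),
      p2_mul3 (hud p) (hu12d p) (hG0 p),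
      p2_comp_sub (hg0 _),
      p2_p1_comm (contDiff_p2 hu) p]
  ring

end AB
end VirialAux
set_option maxHeartbeats 2000000 in
/-- **Virial identity for the localized mass** (Step 1 of the proof of Lemma 2.8):
for a smooth, rapidly decaying solution `φ` of the 2D cubic ZK equation on `[0,t₀]`, a `C³`
bounded weight `ψ` and a `C¹` shift `ρ`, the localized mass
`∫ φ² ψ(x₁ − ρ(t))` satisfies the stated differential identity. -/
theorem virial_identity_localized_mass
    (t₀ : ℝ) (ht₀ : 0 < t₀)
    (φ : ℝ → ℝ × ℝ → ℝ)
    (hsmooth : ContDiffOn ℝ (⊤ : ℕ∞) (fun q : ℝ × (ℝ × ℝ) => φ q.1 q.2)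
      (Set.Icc 0 t₀ ×ˢ Set.univ))
    (hPDE : ∀ t ∈ Set.Icc (0 : ℝ) t₀, ∀ p : ℝ × ℝ,
      derivWithin (fun τ => φ τ p) (Set.Icc (0 : ℝ) t₀) t
        + p1 (fun z => lap (φ t) z + (φ t z) ^ 3) p = 0)
    -- rapid decay of all spatial derivatives, uniformly on [0, t₀]
    (hdecay : ∀ m n k : ℕ, ∃ C : ℝ, ∀ t ∈ Set.Icc (0 : ℝ) t₀, ∀ p : ℝ × ℝ,
      (1 + ‖p‖) ^ k * |pmix m n (φ t) p| ≤ C)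
    (ψ : ℝ → ℝ) (hψ : ContDiff ℝ 3 ψ)
    (hψbdd : ∃ M : ℝ, ∀ x : ℝ,
      |ψ x| + |deriv ψ x| + |iteratedDeriv 2 ψ x| + |iteratedDeriv 3 ψ x| ≤ M)
    (ρ : ℝ → ℝ) (hρ : ContDiffOn ℝ 1 ρ (Set.Icc 0 t₀)) :
    ∀ t ∈ Set.Icc (0 : ℝ) t₀,
      derivWithin (fun τ => ∫ x : ℝ × ℝ, (φ τ x) ^ 2 * ψ (x.1 - ρ τ))
          (Set.Icc (0 : ℝ) t₀) t =
        -(∫ x : ℝ × ℝ, (3 * (p1 (φ t) x) ^ 2 + (p2 (φ t) x) ^ 2) * deriv ψ (x.1 - ρ t))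
        + (∫ x : ℝ × ℝ, (φ t x) ^ 2 * iteratedDeriv 3 ψ (x.1 - ρ t))
        - derivWithin ρ (Set.Icc (0 : ℝ) t₀) t
            * (∫ x : ℝ × ℝ, (φ t x) ^ 2 * deriv ψ (x.1 - ρ t))
        + (3 : ℝ) / 2 * ∫ x : ℝ × ℝ, (φ t x) ^ 4 * deriv ψ (x.1 - ρ t) := by
  intro t ht
  have hUD : UniqueDiffOn ℝ (Set.Icc (0:ℝ) t₀) := uniqueDiffOn_Icc ht₀
  -- ψ facts
  have h3e : (3 : WithTop ℕ∞) = 2 + 1 := by norm_num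
  obtain ⟨hdψ0, -, hc2⟩ := contDiff_succ_iff_deriv.mp (h3e ▸ hψ)
  have h2e : (2 : WithTop ℕ∞) = 1 + 1 := by norm_num
  obtain ⟨hdψ1, -, hc1⟩ := contDiff_succ_iff_deriv.mp (h2e ▸ hc2)
  obtain ⟨hdψ2, hcψ3⟩ := contDiff_one_iff_deriv.mp hc1
  have hit2 : iteratedDeriv 2 ψ = deriv (deriv ψ) := by
    rw [iteratedDeriv_succ, iteratedDeriv_one]
  have hit3 : iteratedDeriv 3 ψ = deriv (deriv (deriv ψ)) := by
    rw [iteratedDeriv_succ, iteratedDeriv_succ, iteratedDeriv_one]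
  obtain ⟨M, hM⟩ := hψbdd
  have hMnn : 0 ≤ M := le_trans (by positivity) (hM 0)
  have hMψ0 : ∀ x, |ψ x| ≤ M := by
    intro x; have h := hM x
    have h1 := abs_nonneg (deriv ψ x); have h2 := abs_nonneg (iteratedDeriv 2 ψ x)
    have h3 := abs_nonneg (iteratedDeriv 3 ψ x); linarith
  have hMψ1 : ∀ x, |deriv ψ x| ≤ M := by
    intro x; have h := hM x
    have h1 := abs_nonneg (ψ x); have h2 := abs_nonneg (iteratedDeriv 2 ψ x)
    have h3 := abs_nonneg (iteratedDeriv 3 ψ x); linarith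
  have hMψ2 : ∀ x, |deriv (deriv ψ) x| ≤ M := by
    intro x; have h := hM x
    rw [hit2] at h
    have h1 := abs_nonneg (ψ x); have h2 := abs_nonneg (deriv ψ x)
    have h3 := abs_nonneg (iteratedDeriv 3 ψ x); linarith
  have hMψ3 : ∀ x, |deriv (deriv (deriv ψ)) x| ≤ M := by
    intro x; have h := hM x
    rw [hit3] at h
    have h1 := abs_nonneg (ψ x); have h2 := abs_nonneg (deriv ψ x)
    have h3 := abs_nonneg (iteratedDeriv 2 ψ x); linarith
  -- slice smoothness
  have hslice : ∀ τ ∈ Set.Icc (0:ℝ) t₀, ContDiff ℝ (⊤ : ℕ∞) (φ τ) := by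
    intro τ hτ
    have hemb : ContDiff ℝ (⊤ : ℕ∞) (fun y : ℝ×ℝ => ((τ, y) : ℝ × (ℝ×ℝ))) :=
      contDiff_const.prodMk contDiff_id
    have h := hsmooth.comp (hemb.contDiffOn (s := (Set.univ : Set (ℝ×ℝ)))) (fun y _ => ⟨hτ, Set.mem_univ y⟩)
    exact contDiffOn_univ.mp h
  have htime : ∀ x : ℝ×ℝ, ContDiffOn ℝ (⊤ : ℕ∞) (fun τ => φ τ x) (Set.Icc 0 t₀) := by
    intro x
    have hemb : ContDiff ℝ (⊤ : ℕ∞) (fun τ : ℝ => ((τ, x) : ℝ × (ℝ×ℝ))) :=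
      contDiff_id.prodMk contDiff_const
    exact hsmooth.comp (hemb.contDiffOn (s := Set.Icc 0 t₀)) (fun τ hτ => ⟨hτ, Set.mem_univ x⟩)
  have hwd : ∀ τ ∈ Set.Icc (0:ℝ) t₀, ∀ x : ℝ×ℝ, HasDerivWithinAt (fun σ => φ σ x)
      (derivWithin (fun σ => φ σ x) (Set.Icc 0 t₀) τ) (Set.Icc 0 t₀) τ :=
    fun τ hτ x => (((htime x).differentiableOn (by simp)) τ hτ).hasDerivWithinAt
  -- PDE rewrite
  have hPDE' : ∀ τ ∈ Set.Icc (0:ℝ) t₀, ∀ x : ℝ×ℝ,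
      derivWithin (fun σ => φ σ x) (Set.Icc 0 t₀) τ
        = -(pmix 3 0 (φ τ) x + pmix 1 2 (φ τ) x + 3 * φ τ x ^ 2 * p1 (φ τ) x) := by
    intro τ hτ x
    have hu := hslice τ hτ
    have h := hPDE τ hτ x
    have h11 : DifferentiableAt ℝ (fun z => p1 (p1 (φ τ)) z) x :=
      ((VirialAux.contDiff_p1 (VirialAux.contDiff_p1 hu)).differentiable (by simp)) x
    have h22 : DifferentiableAt ℝ (fun z => p2 (p2 (φ τ)) z) x :=
      ((VirialAux.contDiff_p2 (VirialAux.contDiff_p2 hu)).differentiable (by simp)) x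
    have hlapd : DifferentiableAt ℝ (lap (φ τ)) x := h11.add h22
    have hcu : DifferentiableAt ℝ (φ τ) x := (hu.differentiable (by simp)) x
    have hcubed : DifferentiableAt ℝ (fun z => φ τ z ^ 3) x := hcu.pow 3
    rw [VirialAux.p1_add hlapd hcubed] at h
    rw [show lap (φ τ) = fun z => p1 (p1 (φ τ)) z + p2 (p2 (φ τ)) z from rfl] at h
    rw [VirialAux.p1_add h11 h22] at h
    rw [VirialAux.p1_pow 3 hcu] at h
    push_cast at h
    norm_num at h
    have e30 : p1 (fun z => p1 (p1 (φ τ)) z) x = pmix 3 0 (φ τ) x := rfl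
    have e12 : p1 (fun z => p2 (p2 (φ τ)) z) x = pmix 1 2 (φ τ) x := rfl
    rw [e30, e12] at h
    linarith
  -- uniform decay constants
  have hdecC : ∀ m n : ℕ, ∃ C : ℝ, 0 ≤ C
      ∧ (∀ τ ∈ Set.Icc (0:ℝ) t₀, ∀ q : ℝ×ℝ, |pmix m n (φ τ) q| ≤ C)
      ∧ (∀ τ ∈ Set.Icc (0:ℝ) t₀, ∀ q : ℝ×ℝ, |pmix m n (φ τ) q| ≤ C / (1+‖q‖)^3) := by
    intro m n
    obtain ⟨C₁, h1⟩ := hdecay m n 0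
    obtain ⟨C₂, h2⟩ := hdecay m n 3
    refine ⟨max (max C₁ C₂) 0, le_max_right _ _, ?_, ?_⟩
    · intro τ hτ q
      have h := h1 τ hτ q
      simp only [pow_zero, one_mul] at h
      exact le_trans h (le_trans (le_max_left _ _) (le_max_left _ _))
    · intro τ hτ q
      have h := h2 τ hτ q
      have hq : (0:ℝ) < (1+‖q‖)^3 := by positivity
      rw [le_div_iff₀ hq]
      calc |pmix m n (φ τ) q| * (1+‖q‖)^3 = (1+‖q‖)^3 * |pmix m n (φ τ) q| := by ring
        _ ≤ C₂ := h
        _ ≤ max (max C₁ C₂) 0 := le_trans (le_max_right _ _) (le_max_left _ _)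
  obtain ⟨K00, hK00nn, hB00, hD00⟩ := hdecC 0 0
  obtain ⟨K10, hK10nn, hB10, hD10⟩ := hdecC 1 0
  obtain ⟨K01, hK01nn, hB01, hD01⟩ := hdecC 0 1
  obtain ⟨K20, hK20nn, hB20, hD20⟩ := hdecC 2 0
  obtain ⟨K11, hK11nn, hB11, hD11⟩ := hdecC 1 1
  obtain ⟨K30, hK30nn, hB30, hD30⟩ := hdecC 3 0
  obtain ⟨K12, hK12nn, hB12, hD12⟩ := hdecC 1 2
  -- ρ facts
  have hρderiv : ∀ τ ∈ Set.Icc (0:ℝ) t₀, HasDerivWithinAt ρ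
      (derivWithin ρ (Set.Icc 0 t₀) τ) (Set.Icc 0 t₀) τ :=
    fun τ hτ => ((hρ.differentiableOn one_ne_zero) τ hτ).hasDerivWithinAt
  obtain ⟨R₀, hR₀⟩ := isCompact_Icc.exists_bound_of_continuousOn
    (hρ.continuousOn_derivWithin hUD le_rfl)
  have hRnn : (0:ℝ) ≤ max R₀ 0 := le_max_right _ _
  have hRb : ∀ τ ∈ Set.Icc (0:ℝ) t₀, |derivWithin ρ (Set.Icc 0 t₀) τ| ≤ max R₀ 0 :=
    fun τ hτ => le_trans (hR₀ τ hτ) (le_max_left _ _)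
  -- bound on the time derivative of φ
  have hwb : ∀ τ ∈ Set.Icc (0:ℝ) t₀, ∀ x : ℝ×ℝ,
      |derivWithin (fun σ => φ σ x) (Set.Icc 0 t₀) τ|
        ≤ (K30 + K12 + 3 * K00^2 * K10) / (1+‖x‖)^3 := by
    intro τ hτ x
    rw [hPDE' τ hτ x, abs_neg]
    have d3 : (0:ℝ) < (1+‖x‖)^3 := by positivity
    have h30 := hD30 τ hτ x
    have h12 := hD12 τ hτ x
    have h10 : |p1 (φ τ) x| ≤ K10 / (1+‖x‖)^3 := hD10 τ hτ x
    have h00 : |φ τ x| ≤ K00 := hB00 τ hτ x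
    have hsq : φ τ x ^ 2 ≤ K00^2 := by nlinarith [abs_nonneg (φ τ x), sq_abs (φ τ x)]
    have hc : |3 * φ τ x ^ 2 * p1 (φ τ) x| ≤ 3 * K00^2 * (K10 / (1+‖x‖)^3) := by
      calc |3 * φ τ x ^ 2 * p1 (φ τ) x| = 3 * φ τ x ^ 2 * |p1 (φ τ) x| := by
            rw [abs_mul, abs_mul, abs_of_nonneg (by norm_num : (0:ℝ) ≤ 3),
              abs_of_nonneg (sq_nonneg _)]
        _ ≤ 3 * K00^2 * (K10 / (1+‖x‖)^3) := by
            apply mul_le_mul (by nlinarith) h10 (abs_nonneg _) (by positivity)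
    calc |pmix 3 0 (φ τ) x + pmix 1 2 (φ τ) x + 3 * φ τ x ^ 2 * p1 (φ τ) x|
        ≤ |pmix 3 0 (φ τ) x + pmix 1 2 (φ τ) x| + |3 * φ τ x ^ 2 * p1 (φ τ) x| := abs_add_le _ _
      _ ≤ |pmix 3 0 (φ τ) x| + |pmix 1 2 (φ τ) x| + |3 * φ τ x ^ 2 * p1 (φ τ) x| := by
          have := abs_add_le (pmix 3 0 (φ τ) x) (pmix 1 2 (φ τ) x); linarith
      _ ≤ K30/(1+‖x‖)^3 + K12/(1+‖x‖)^3 + 3*K00^2*(K10/(1+‖x‖)^3) := by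
          exact add_le_add (add_le_add h30 h12) hc
      _ = (K30 + K12 + 3 * K00^2 * K10) / (1+‖x‖)^3 := by ring
  -- integrability of the mass integrand
  have hFcont : ∀ τ ∈ Set.Icc (0:ℝ) t₀,
      Continuous (fun x : ℝ×ℝ => φ τ x ^2 * ψ (x.1 - ρ τ)) := by
    intro τ hτ
    exact (((hslice τ hτ).continuous).pow 2).mul
      (hψ.continuous.comp (continuous_fst.sub continuous_const))
  have hFint : ∀ τ ∈ Set.Icc (0:ℝ) t₀,
      Integrable (fun x : ℝ×ℝ => φ τ x ^2 * ψ (x.1 - ρ τ)) := by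
    intro τ hτ
    apply VirialAux.integrable_of_decay (hFcont τ hτ) (C := K00 * K00 * M)
    intro q
    calc |φ τ q ^2 * ψ (q.1 - ρ τ)| = |φ τ q * φ τ q * ψ (q.1 - ρ τ)| := by rw [sq]
      _ ≤ K00 * (K00/(1+‖q‖)^3) * M :=
          VirialAux.abs_mul3_le (hB00 τ hτ q) (hD00 τ hτ q) (hMψ0 _)
      _ = K00 * K00 * M / (1+‖q‖)^3 := by ring
  -- the dominating function
  have hGint : Integrable (fun x : ℝ×ℝ =>
      (2 * K00 * ((K30 + K12 + 3 * K00^2 * K10)) * M + K00 * K00 * M * max R₀ 0)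
        / (1+‖x‖)^3) := by
    apply VirialAux.integrable_of_decay
    · exact continuous_const.div (by fun_prop) (fun x => by positivity)
    · intro q
      rw [abs_of_nonneg]
      have h1 : (0:ℝ) ≤ K30 + K12 + 3 * K00^2 * K10 := by positivity
      positivity
  -- differentiation under the integral sign
  have hHD : HasDerivWithinAt (fun τ => ∫ x : ℝ×ℝ, φ τ x ^2 * ψ (x.1 - ρ τ))
      (∫ x : ℝ×ℝ, (2 * φ t x * derivWithin (fun σ => φ σ x) (Set.Icc 0 t₀) t * ψ (x.1 - ρ t)
        + φ t x ^2 * (deriv ψ (x.1 - ρ t) * -(derivWithin ρ (Set.Icc 0 t₀) t))))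
      (Set.Icc 0 t₀) t := by
    apply VirialAux.hasDerivWithinAt_integral
      (f := fun τ x => φ τ x ^2 * ψ (x.1 - ρ τ))
      (f' := fun τ x =>
        2 * φ τ x * derivWithin (fun σ => φ σ x) (Set.Icc 0 t₀) τ * ψ (x.1 - ρ τ)
        + φ τ x ^2 * (deriv ψ (x.1 - ρ τ) * -(derivWithin ρ (Set.Icc 0 t₀) τ)))
      (convex_Icc 0 t₀) ht hFint ?_ hGint ?_
    · intro τ hτ x
      have h1 := hwd τ hτ x
      have hsq := h1.pow 2
      have hψd : HasDerivAt ψ (deriv ψ (x.1 - ρ τ)) (x.1 - ρ τ) := (hdψ0 _).hasDerivAt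
      have hshift : HasDerivWithinAt (fun σ => x.1 - ρ σ)
          (-(derivWithin ρ (Set.Icc 0 t₀) τ)) (Set.Icc 0 t₀) τ :=
        (hρderiv τ hτ).const_sub x.1
      have hcomp := hψd.comp_hasDerivWithinAt τ hshift
      have hprod := hsq.mul hcomp
      convert hprod using 1
      push_cast
      show _ = ((2:ℕ):ℝ) * φ τ x ^ (2-1) * derivWithin (fun σ => φ σ x) (Set.Icc 0 t₀) τ
          * ψ (x.1 - ρ τ) + φ τ x ^ 2 * (deriv ψ (x.1 - ρ τ) * -(derivWithin ρ (Set.Icc 0 t₀) τ))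
      rw [show (2:ℕ) - 1 = 1 from rfl, Nat.cast_ofNat, pow_one]
      all_goals rfl
    · intro τ hτ x
      have hρ' : |-(derivWithin ρ (Set.Icc 0 t₀) τ)| ≤ max R₀ 0 := by
        rw [abs_neg]; exact hRb τ hτ
      calc |2 * φ τ x * derivWithin (fun σ => φ σ x) (Set.Icc 0 t₀) τ * ψ (x.1 - ρ τ)
          + φ τ x ^2 * (deriv ψ (x.1 - ρ τ) * -(derivWithin ρ (Set.Icc 0 t₀) τ))|
          ≤ |2 * φ τ x * derivWithin (fun σ => φ σ x) (Set.Icc 0 t₀) τ * ψ (x.1 - ρ τ)|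
            + |φ τ x * φ τ x * deriv ψ (x.1 - ρ τ) * -(derivWithin ρ (Set.Icc 0 t₀) τ)| := by
            have : φ τ x ^2 * (deriv ψ (x.1 - ρ τ) * -(derivWithin ρ (Set.Icc 0 t₀) τ))
                = φ τ x * φ τ x * deriv ψ (x.1 - ρ τ) * -(derivWithin ρ (Set.Icc 0 t₀) τ) := by
              ring
            rw [← this]
            exact abs_add_le _ _
        _ ≤ 2 * K00 * ((K30 + K12 + 3 * K00^2 * K10) / (1+‖x‖)^3) * M
            + K00 * (K00/(1+‖x‖)^3) * M * max R₀ 0 := by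
            apply add_le_add
            · apply VirialAux.abs_mul4_le _ (hB00 τ hτ x) (hwb τ hτ x) (hMψ0 _)
              rw [abs_of_nonneg (by norm_num : (0:ℝ) ≤ 2)]
            · exact VirialAux.abs_mul4_le (hB00 τ hτ x) (hD00 τ hτ x) (hMψ1 _) hρ'
        _ = (2 * K00 * ((K30 + K12 + 3 * K00^2 * K10)) * M + K00 * K00 * M * max R₀ 0)
            / (1+‖x‖)^3 := by ring
  rw [hHD.derivWithin (hUD t ht)]
  clear hHD
  -- the main algebraic identity
  have hu : ContDiff ℝ (⊤ : ℕ∞) (φ t) := hslice t ht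
  have hkey : (fun x : ℝ×ℝ =>
      2 * φ t x * derivWithin (fun σ => φ σ x) (Set.Icc 0 t₀) t * ψ (x.1 - ρ t)
        + φ t x ^2 * (deriv ψ (x.1 - ρ t) * -(derivWithin ρ (Set.Icc 0 t₀) t)))
      = fun x : ℝ×ℝ =>
        -(p1 (VirialAux.Afun (φ t) ψ (deriv ψ) (deriv (deriv ψ)) (ρ t)) x)
        - p2 (VirialAux.Bfun (φ t) ψ (ρ t)) x
        + (-((3*(p1 (φ t) x)^2 + (p2 (φ t) x)^2) * deriv ψ (x.1 - ρ t))
           + φ t x ^2 * deriv (deriv (deriv ψ)) (x.1 - ρ t)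
           - derivWithin ρ (Set.Icc 0 t₀) t * (φ t x ^2 * deriv ψ (x.1 - ρ t))
           + 3/2 * (φ t x ^4 * deriv ψ (x.1 - ρ t))) := by
    funext x
    rw [hPDE' t ht x,
        VirialAux.p1_Afun hu hdψ0 hdψ1 hdψ2 rfl rfl rfl x,
        VirialAux.p2_Bfun hu hdψ0 x,
        show pmix 3 0 (φ t) = p1 (p1 (p1 (φ t))) from rfl,
        show pmix 1 2 (φ t) = p1 (p2 (p2 (φ t))) from rfl]
    ring
  rw [hkey]
  rw [hit3]
  -- abbreviations for bounds at time t
  have b00 : ∀ z : ℝ×ℝ, |φ t z| ≤ K00 := fun z => hB00 t ht z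
  have d00 : ∀ z : ℝ×ℝ, |φ t z| ≤ K00/(1+‖z‖)^3 := fun z => hD00 t ht z
  have b10 : ∀ z : ℝ×ℝ, |p1 (φ t) z| ≤ K10 := fun z => hB10 t ht z
  have d10 : ∀ z : ℝ×ℝ, |p1 (φ t) z| ≤ K10/(1+‖z‖)^3 := fun z => hD10 t ht z
  have b01 : ∀ z : ℝ×ℝ, |p2 (φ t) z| ≤ K01 := fun z => hB01 t ht z
  have d01 : ∀ z : ℝ×ℝ, |p2 (φ t) z| ≤ K01/(1+‖z‖)^3 := fun z => hD01 t ht z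
  have d20 : ∀ z : ℝ×ℝ, |p1 (p1 (φ t)) z| ≤ K20/(1+‖z‖)^3 := fun z => hD20 t ht z
  have b11 : ∀ z : ℝ×ℝ, |p1 (p2 (φ t)) z| ≤ K11 := fun z => hB11 t ht z
  have d11 : ∀ z : ℝ×ℝ, |p1 (p2 (φ t)) z| ≤ K11/(1+‖z‖)^3 := fun z => hD11 t ht z
  have d30 : ∀ z : ℝ×ℝ, |p1 (p1 (p1 (φ t))) z| ≤ K30/(1+‖z‖)^3 := fun z => hD30 t ht z
  have d12 : ∀ z : ℝ×ℝ, |p1 (p2 (p2 (φ t))) z| ≤ K12/(1+‖z‖)^3 := fun z => hD12 t ht z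
  have hdz : ∀ z : ℝ×ℝ, (0:ℝ) < (1+‖z‖)^3 := fun z => by positivity
  -- continuity of the various factors
  have hcu : Continuous (φ t) := hu.continuous
  have hcu1 : Continuous (p1 (φ t)) := (VirialAux.contDiff_p1 hu).continuous
  have hcu2 : Continuous (p2 (φ t)) := (VirialAux.contDiff_p2 hu).continuous
  have hcu11 : Continuous (p1 (p1 (φ t))) :=
    (VirialAux.contDiff_p1 (VirialAux.contDiff_p1 hu)).continuous
  have hcu12 : Continuous (p1 (p2 (φ t))) :=
    (VirialAux.contDiff_p1 (VirialAux.contDiff_p2 hu)).continuous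
  have hcu111 : Continuous (p1 (p1 (p1 (φ t)))) :=
    (VirialAux.contDiff_p1 (VirialAux.contDiff_p1 (VirialAux.contDiff_p1 hu))).continuous
  have hcu122 : Continuous (p1 (p2 (p2 (φ t)))) :=
    (VirialAux.contDiff_p1 (VirialAux.contDiff_p2 (VirialAux.contDiff_p2 hu))).continuous
  have hshiftc : Continuous (fun z : ℝ×ℝ => z.1 - ρ t) := continuous_fst.sub continuous_const
  have hψ0c : Continuous ψ := hψ.continuous
  have hψ1c : Continuous (deriv ψ) := hdψ1.continuous
  have hψ2c : Continuous (deriv (deriv ψ)) := hdψ2.continuous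
  -- differentiability and decay of the flux functions
  have hAdiff : Differentiable ℝ (VirialAux.Afun (φ t) ψ (deriv ψ) (deriv (deriv ψ)) (ρ t)) :=
    VirialAux.differentiable_Afun hu hdψ0 hdψ1 hdψ2
  have hBdiff : Differentiable ℝ (VirialAux.Bfun (φ t) ψ (ρ t)) :=
    VirialAux.differentiable_Bfun hu hdψ0
  have hp1Aeq : p1 (VirialAux.Afun (φ t) ψ (deriv ψ) (deriv (deriv ψ)) (ρ t))
      = fun z : ℝ×ℝ =>
        2 * φ t z * p1 (p1 (p1 (φ t))) z * ψ (z.1 - ρ t)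
        - 2 * p2 (φ t) z * p1 (p2 (φ t)) z * ψ (z.1 - ρ t)
        + 6 * φ t z^3 * p1 (φ t) z * ψ (z.1 - ρ t)
        - (3 * (p1 (φ t) z)^2 + (p2 (φ t) z)^2) * deriv ψ (z.1 - ρ t)
        + (3/2) * φ t z^4 * deriv ψ (z.1 - ρ t)
        + φ t z^2 * deriv (deriv (deriv ψ)) (z.1 - ρ t) :=
    funext (VirialAux.p1_Afun hu hdψ0 hdψ1 hdψ2 rfl rfl rfl)
  have hp2Beq : p2 (VirialAux.Bfun (φ t) ψ (ρ t))
      = fun z : ℝ×ℝ =>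
        2 * p2 (φ t) z * p1 (p2 (φ t)) z * ψ (z.1 - ρ t)
        + 2 * φ t z * p1 (p2 (p2 (φ t))) z * ψ (z.1 - ρ t) :=
    funext (VirialAux.p2_Bfun hu hdψ0)
  have hAcont : Continuous (VirialAux.Afun (φ t) ψ (deriv ψ) (deriv (deriv ψ)) (ρ t)) :=
    hAdiff.continuous
  have hBcont : Continuous (VirialAux.Bfun (φ t) ψ (ρ t)) := hBdiff.continuous
  have hp1Acont : Continuous (p1 (VirialAux.Afun (φ t) ψ (deriv ψ) (deriv (deriv ψ)) (ρ t))) := by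
    rw [hp1Aeq]; fun_prop
  have hp2Bcont : Continuous (p2 (VirialAux.Bfun (φ t) ψ (ρ t))) := by
    rw [hp2Beq]; fun_prop
  have hAdec : ∀ z : ℝ×ℝ, |VirialAux.Afun (φ t) ψ (deriv ψ) (deriv (deriv ψ)) (ρ t) z|
      ≤ (2*K00*K20*M + K10*K10*M + 2*K00*K10*M + K00*K00*M + K01*K01*M
          + (3/2*(K00*K00))*(K00*K00)*M) / (1+‖z‖)^3 := by
    intro z
    have hAz : VirialAux.Afun (φ t) ψ (deriv ψ) (deriv (deriv ψ)) (ρ t) z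
        = (2*φ t z) * (p1 (p1 (φ t)) z) * ψ (z.1-ρ t)
          + (-(p1 (φ t) z)) * (p1 (φ t) z) * ψ (z.1-ρ t)
          + (-2*φ t z) * (p1 (φ t) z) * deriv ψ (z.1-ρ t)
          + (φ t z) * (φ t z) * deriv (deriv ψ) (z.1-ρ t)
          + (-(p2 (φ t) z)) * (p2 (φ t) z) * ψ (z.1-ρ t)
          + (3/2*(φ t z * φ t z)) * (φ t z * φ t z) * ψ (z.1-ρ t) := by
      simp only [VirialAux.Afun]; ring
    rw [hAz]
    have h1 : |(2*φ t z) * (p1 (p1 (φ t)) z) * ψ (z.1-ρ t)| ≤ (2*K00) * (K20/(1+‖z‖)^3) * M :=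
      VirialAux.abs_mul3_le
        (by rw [abs_mul, abs_two]; exact mul_le_mul_of_nonneg_left (b00 z) (by norm_num))
        (d20 z) (hMψ0 _)
    have h2 : |(-(p1 (φ t) z)) * (p1 (φ t) z) * ψ (z.1-ρ t)| ≤ K10 * (K10/(1+‖z‖)^3) * M :=
      VirialAux.abs_mul3_le (by rw [abs_neg]; exact b10 z) (d10 z) (hMψ0 _)
    have h3 : |(-2*φ t z) * (p1 (φ t) z) * deriv ψ (z.1-ρ t)| ≤ (2*K00) * (K10/(1+‖z‖)^3) * M :=
      VirialAux.abs_mul3_le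
        (by rw [abs_mul, show |(-2:ℝ)| = 2 from by norm_num]
            exact mul_le_mul_of_nonneg_left (b00 z) (by norm_num))
        (d10 z) (hMψ1 _)
    have h4 : |(φ t z) * (φ t z) * deriv (deriv ψ) (z.1-ρ t)| ≤ K00 * (K00/(1+‖z‖)^3) * M :=
      VirialAux.abs_mul3_le (b00 z) (d00 z) (hMψ2 _)
    have h5 : |(-(p2 (φ t) z)) * (p2 (φ t) z) * ψ (z.1-ρ t)| ≤ K01 * (K01/(1+‖z‖)^3) * M :=
      VirialAux.abs_mul3_le (by rw [abs_neg]; exact b01 z) (d01 z) (hMψ0 _)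
    have h6 : |(3/2*(φ t z * φ t z)) * (φ t z * φ t z) * ψ (z.1-ρ t)|
        ≤ (3/2*(K00*K00)) * (K00*(K00/(1+‖z‖)^3)) * M :=
      VirialAux.abs_mul3_le
        (by rw [abs_mul, show |(3/2:ℝ)| = 3/2 from by norm_num, abs_mul]
            exact mul_le_mul_of_nonneg_left
              (mul_le_mul (b00 z) (b00 z) (abs_nonneg _) hK00nn) (by norm_num))
        (by rw [abs_mul]; exact mul_le_mul (b00 z) (d00 z) (abs_nonneg _) hK00nn)
        (hMψ0 _)
    calc |(2*φ t z) * (p1 (p1 (φ t)) z) * ψ (z.1-ρ t)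
          + (-(p1 (φ t) z)) * (p1 (φ t) z) * ψ (z.1-ρ t)
          + (-2*φ t z) * (p1 (φ t) z) * deriv ψ (z.1-ρ t)
          + (φ t z) * (φ t z) * deriv (deriv ψ) (z.1-ρ t)
          + (-(p2 (φ t) z)) * (p2 (φ t) z) * ψ (z.1-ρ t)
          + (3/2*(φ t z * φ t z)) * (φ t z * φ t z) * ψ (z.1-ρ t)|
        ≤ |(2*φ t z) * (p1 (p1 (φ t)) z) * ψ (z.1-ρ t)|
          + |(-(p1 (φ t) z)) * (p1 (φ t) z) * ψ (z.1-ρ t)|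
          + |(-2*φ t z) * (p1 (φ t) z) * deriv ψ (z.1-ρ t)|
          + |(φ t z) * (φ t z) * deriv (deriv ψ) (z.1-ρ t)|
          + |(-(p2 (φ t) z)) * (p2 (φ t) z) * ψ (z.1-ρ t)|
          + |(3/2*(φ t z * φ t z)) * (φ t z * φ t z) * ψ (z.1-ρ t)| := VirialAux.abs_add6
      _ ≤ (2*K00) * (K20/(1+‖z‖)^3) * M + K10 * (K10/(1+‖z‖)^3) * M
          + (2*K00) * (K10/(1+‖z‖)^3) * M + K00 * (K00/(1+‖z‖)^3) * M
          + K01 * (K01/(1+‖z‖)^3) * M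
          + (3/2*(K00*K00)) * (K00*(K00/(1+‖z‖)^3)) * M := by linarith
      _ = (2*K00*K20*M + K10*K10*M + 2*K00*K10*M + K00*K00*M + K01*K01*M
          + (3/2*(K00*K00))*(K00*K00)*M) / (1+‖z‖)^3 := by ring
  have hp1Adec : ∀ z : ℝ×ℝ, |p1 (VirialAux.Afun (φ t) ψ (deriv ψ) (deriv (deriv ψ)) (ρ t)) z|
      ≤ ((2*K00)*K30*M + (2*K01)*K11*M + (6*K00^3)*K10*M + (3*(K10*K10) + K01*K01)*M
          + (3/2*K00^3)*K00*M + K00*K00*M) / (1+‖z‖)^3 := by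
    intro z
    rw [show p1 (VirialAux.Afun (φ t) ψ (deriv ψ) (deriv (deriv ψ)) (ρ t)) z = _ from
      VirialAux.p1_Afun hu hdψ0 hdψ1 hdψ2 rfl rfl rfl z]
    have hrw : 2 * φ t z * p1 (p1 (p1 (φ t))) z * ψ (z.1 - ρ t)
        - 2 * p2 (φ t) z * p1 (p2 (φ t)) z * ψ (z.1 - ρ t)
        + 6 * φ t z^3 * p1 (φ t) z * ψ (z.1 - ρ t)
        - (3 * (p1 (φ t) z)^2 + (p2 (φ t) z)^2) * deriv ψ (z.1 - ρ t)
        + (3/2) * φ t z^4 * deriv ψ (z.1 - ρ t)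
        + φ t z^2 * deriv (deriv (deriv ψ)) (z.1 - ρ t)
        = (2 * φ t z) * (p1 (p1 (p1 (φ t))) z) * ψ (z.1 - ρ t)
          + (-2 * p2 (φ t) z) * (p1 (p2 (φ t)) z) * ψ (z.1 - ρ t)
          + (6 * φ t z^3) * (p1 (φ t) z) * ψ (z.1 - ρ t)
          + (-((3 * (p1 (φ t) z)^2 + (p2 (φ t) z)^2) * deriv ψ (z.1 - ρ t)))
          + (3/2 * φ t z^3) * (φ t z) * deriv ψ (z.1 - ρ t)
          + (φ t z) * (φ t z) * deriv (deriv (deriv ψ)) (z.1 - ρ t) := by ring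
    rw [hrw]
    have h1 : |(2 * φ t z) * (p1 (p1 (p1 (φ t))) z) * ψ (z.1 - ρ t)|
        ≤ (2*K00) * (K30/(1+‖z‖)^3) * M :=
      VirialAux.abs_mul3_le
        (by rw [abs_mul, abs_two]; exact mul_le_mul_of_nonneg_left (b00 z) (by norm_num))
        (d30 z) (hMψ0 _)
    have h2 : |(-2 * p2 (φ t) z) * (p1 (p2 (φ t)) z) * ψ (z.1 - ρ t)|
        ≤ (2*K01) * (K11/(1+‖z‖)^3) * M :=
      VirialAux.abs_mul3_le
        (by rw [abs_mul, show |(-2:ℝ)| = 2 from by norm_num]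
            exact mul_le_mul_of_nonneg_left (b01 z) (by norm_num))
        (d11 z) (hMψ0 _)
    have h3 : |(6 * φ t z^3) * (p1 (φ t) z) * ψ (z.1 - ρ t)|
        ≤ (6*K00^3) * (K10/(1+‖z‖)^3) * M :=
      VirialAux.abs_mul3_le
        (by rw [abs_mul, show |(6:ℝ)| = 6 from by norm_num, abs_pow]
            exact mul_le_mul_of_nonneg_left
              (pow_le_pow_left₀ (abs_nonneg _) (b00 z) 3) (by norm_num))
        (d10 z) (hMψ0 _)
    have hsq10 : (p1 (φ t) z)^2 ≤ K10*(K10/(1+‖z‖)^3) := by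
      rw [sq, ← abs_mul_abs_self]
      exact mul_le_mul (b10 z) (d10 z) (abs_nonneg _) hK10nn
    have hsq01 : (p2 (φ t) z)^2 ≤ K01*(K01/(1+‖z‖)^3) := by
      rw [sq, ← abs_mul_abs_self]
      exact mul_le_mul (b01 z) (d01 z) (abs_nonneg _) hK01nn
    have hnn4 : (0:ℝ) ≤ 3*(K10*(K10/(1+‖z‖)^3)) + K01*(K01/(1+‖z‖)^3) :=
      add_nonneg (mul_nonneg (by norm_num)
          (mul_nonneg hK10nn (div_nonneg hK10nn (hdz z).le)))
        (mul_nonneg hK01nn (div_nonneg hK01nn (hdz z).le))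
    have h4 : |(-((3 * (p1 (φ t) z)^2 + (p2 (φ t) z)^2) * deriv ψ (z.1 - ρ t)))|
        ≤ (3*(K10*(K10/(1+‖z‖)^3)) + K01*(K01/(1+‖z‖)^3)) * M := by
      rw [abs_neg, abs_mul]
      apply mul_le_mul _ (hMψ1 _) (abs_nonneg _) hnn4
      rw [abs_of_nonneg (by positivity)]
      linarith
    have h5 : |(3/2 * φ t z^3) * (φ t z) * deriv ψ (z.1 - ρ t)|
        ≤ (3/2*K00^3) * (K00/(1+‖z‖)^3) * M :=
      VirialAux.abs_mul3_le
        (by rw [abs_mul, show |(3/2:ℝ)| = 3/2 from by norm_num, abs_pow]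
            exact mul_le_mul_of_nonneg_left
              (pow_le_pow_left₀ (abs_nonneg _) (b00 z) 3) (by norm_num))
        (d00 z) (hMψ1 _)
    have h6 : |(φ t z) * (φ t z) * deriv (deriv (deriv ψ)) (z.1 - ρ t)|
        ≤ K00 * (K00/(1+‖z‖)^3) * M :=
      VirialAux.abs_mul3_le (b00 z) (d00 z) (hMψ3 _)
    refine le_trans VirialAux.abs_add6 ?_
    calc |(2 * φ t z) * (p1 (p1 (p1 (φ t))) z) * ψ (z.1 - ρ t)|
          + |(-2 * p2 (φ t) z) * (p1 (p2 (φ t)) z) * ψ (z.1 - ρ t)|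
          + |(6 * φ t z^3) * (p1 (φ t) z) * ψ (z.1 - ρ t)|
          + |(-((3 * (p1 (φ t) z)^2 + (p2 (φ t) z)^2) * deriv ψ (z.1 - ρ t)))|
          + |(3/2 * φ t z^3) * (φ t z) * deriv ψ (z.1 - ρ t)|
          + |(φ t z) * (φ t z) * deriv (deriv (deriv ψ)) (z.1 - ρ t)|
        ≤ (2*K00) * (K30/(1+‖z‖)^3) * M + (2*K01) * (K11/(1+‖z‖)^3) * M
          + (6*K00^3) * (K10/(1+‖z‖)^3) * M
          + (3*(K10*(K10/(1+‖z‖)^3)) + K01*(K01/(1+‖z‖)^3)) * M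
          + (3/2*K00^3) * (K00/(1+‖z‖)^3) * M + K00 * (K00/(1+‖z‖)^3) * M := by linarith
      _ = ((2*K00)*K30*M + (2*K01)*K11*M + (6*K00^3)*K10*M + (3*(K10*K10) + K01*K01)*M
          + (3/2*K00^3)*K00*M + K00*K00*M) / (1+‖z‖)^3 := by ring
  have hBdec : ∀ z : ℝ×ℝ, |VirialAux.Bfun (φ t) ψ (ρ t) z|
      ≤ ((2*K00)*K11*M) / (1+‖z‖)^3 := by
    intro z
    have hBz : VirialAux.Bfun (φ t) ψ (ρ t) z
        = (2*φ t z) * (p1 (p2 (φ t)) z) * ψ (z.1-ρ t) := by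
      simp only [VirialAux.Bfun]; ring
    rw [hBz]
    calc |(2*φ t z) * (p1 (p2 (φ t)) z) * ψ (z.1-ρ t)| ≤ (2*K00) * (K11/(1+‖z‖)^3) * M :=
          VirialAux.abs_mul3_le
            (by rw [abs_mul, abs_two]; exact mul_le_mul_of_nonneg_left (b00 z) (by norm_num))
            (d11 z) (hMψ0 _)
      _ = ((2*K00)*K11*M) / (1+‖z‖)^3 := by ring
  have hp2Bdec : ∀ z : ℝ×ℝ, |p2 (VirialAux.Bfun (φ t) ψ (ρ t)) z|
      ≤ ((2*K01)*K11*M + (2*K00)*K12*M) / (1+‖z‖)^3 := by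
    intro z
    rw [show p2 (VirialAux.Bfun (φ t) ψ (ρ t)) z = _ from VirialAux.p2_Bfun hu hdψ0 z]
    have h1 : |2 * p2 (φ t) z * p1 (p2 (φ t)) z * ψ (z.1 - ρ t)|
        ≤ (2*K01) * (K11/(1+‖z‖)^3) * M :=
      VirialAux.abs_mul3_le
        (by rw [abs_mul, abs_two]; exact mul_le_mul_of_nonneg_left (b01 z) (by norm_num))
        (d11 z) (hMψ0 _)
    have h2 : |2 * φ t z * p1 (p2 (p2 (φ t))) z * ψ (z.1 - ρ t)|
        ≤ (2*K00) * (K12/(1+‖z‖)^3) * M :=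
      VirialAux.abs_mul3_le
        (by rw [abs_mul, abs_two]; exact mul_le_mul_of_nonneg_left (b00 z) (by norm_num))
        (d12 z) (hMψ0 _)
    calc |2 * p2 (φ t) z * p1 (p2 (φ t)) z * ψ (z.1 - ρ t)
          + 2 * φ t z * p1 (p2 (p2 (φ t))) z * ψ (z.1 - ρ t)|
        ≤ |2 * p2 (φ t) z * p1 (p2 (φ t)) z * ψ (z.1 - ρ t)|
          + |2 * φ t z * p1 (p2 (p2 (φ t))) z * ψ (z.1 - ρ t)| := abs_add_le _ _
      _ ≤ (2*K01) * (K11/(1+‖z‖)^3) * M + (2*K00) * (K12/(1+‖z‖)^3) * M := by linarith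
      _ = ((2*K01)*K11*M + (2*K00)*K12*M) / (1+‖z‖)^3 := by ring
  -- vanishing of the flux integrals
  have hz1 : ∫ z : ℝ×ℝ, p1 (VirialAux.Afun (φ t) ψ (deriv ψ) (deriv (deriv ψ)) (ρ t)) z = 0 :=
    VirialAux.integral_p1_eq_zero hAdiff hAcont hAdec hp1Adec hp1Acont
  have hz2 : ∫ z : ℝ×ℝ, p2 (VirialAux.Bfun (φ t) ψ (ρ t)) z = 0 :=
    VirialAux.integral_p2_eq_zero hBdiff hBcont hBdec hp2Bdec hp2Bcont
  -- integrability of all the pieces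
  have hIA : Integrable (p1 (VirialAux.Afun (φ t) ψ (deriv ψ) (deriv (deriv ψ)) (ρ t))) :=
    VirialAux.integrable_of_decay hp1Acont hp1Adec
  have hIB : Integrable (p2 (VirialAux.Bfun (φ t) ψ (ρ t))) :=
    VirialAux.integrable_of_decay hp2Bcont hp2Bdec
  have hIe1 : Integrable (fun x : ℝ×ℝ =>
      (3*(p1 (φ t) x)^2 + (p2 (φ t) x)^2) * deriv ψ (x.1 - ρ t)) := by
    apply VirialAux.integrable_of_decay (C := (3*(K10*K10) + K01*K01)*M)
    · fun_prop
    · intro z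
      have hsq10 : (p1 (φ t) z)^2 ≤ K10*(K10/(1+‖z‖)^3) := by
        rw [sq, ← abs_mul_abs_self]
        exact mul_le_mul (b10 z) (d10 z) (abs_nonneg _) hK10nn
      have hsq01 : (p2 (φ t) z)^2 ≤ K01*(K01/(1+‖z‖)^3) := by
        rw [sq, ← abs_mul_abs_self]
        exact mul_le_mul (b01 z) (d01 z) (abs_nonneg _) hK01nn
      have hnn4 : (0:ℝ) ≤ 3*(K10*(K10/(1+‖z‖)^3)) + K01*(K01/(1+‖z‖)^3) :=
        add_nonneg (mul_nonneg (by norm_num)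
            (mul_nonneg hK10nn (div_nonneg hK10nn (hdz z).le)))
          (mul_nonneg hK01nn (div_nonneg hK01nn (hdz z).le))
      calc |(3*(p1 (φ t) z)^2 + (p2 (φ t) z)^2) * deriv ψ (z.1 - ρ t)|
          ≤ (3*(K10*(K10/(1+‖z‖)^3)) + K01*(K01/(1+‖z‖)^3)) * M := by
            rw [abs_mul]
            apply mul_le_mul _ (hMψ1 _) (abs_nonneg _) hnn4
            rw [abs_of_nonneg (by positivity)]
            linarith
        _ = (3*(K10*K10) + K01*K01)*M / (1+‖z‖)^3 := by ring
  have hIe2 : Integrable (fun x : ℝ×ℝ =>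
      φ t x ^2 * deriv (deriv (deriv ψ)) (x.1 - ρ t)) := by
    apply VirialAux.integrable_of_decay (C := K00*K00*M)
    · fun_prop
    · intro z
      calc |φ t z ^2 * deriv (deriv (deriv ψ)) (z.1 - ρ t)|
          = |(φ t z) * (φ t z) * deriv (deriv (deriv ψ)) (z.1 - ρ t)| := by rw [sq]
        _ ≤ K00 * (K00/(1+‖z‖)^3) * M :=
            VirialAux.abs_mul3_le (b00 z) (d00 z) (hMψ3 _)
        _ = (K00*K00*M) / (1+‖z‖)^3 := by ring
  have hIe3 : Integrable (fun x : ℝ×ℝ => φ t x ^2 * deriv ψ (x.1 - ρ t)) := by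
    apply VirialAux.integrable_of_decay (C := K00*K00*M)
    · fun_prop
    · intro z
      calc |φ t z ^2 * deriv ψ (z.1 - ρ t)|
          = |(φ t z) * (φ t z) * deriv ψ (z.1 - ρ t)| := by rw [sq]
        _ ≤ K00 * (K00/(1+‖z‖)^3) * M :=
            VirialAux.abs_mul3_le (b00 z) (d00 z) (hMψ1 _)
        _ = (K00*K00*M) / (1+‖z‖)^3 := by ring
  have hIe4 : Integrable (fun x : ℝ×ℝ => φ t x ^4 * deriv ψ (x.1 - ρ t)) := by
    apply VirialAux.integrable_of_decay (C := K00^3*K00*M) (hc := by fun_prop)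
    intro z
    calc |φ t z ^4 * deriv ψ (z.1 - ρ t)|
        = |(φ t z ^3) * (φ t z) * deriv ψ (z.1 - ρ t)| := by
          rw [show φ t z ^4 = φ t z ^3 * φ t z from by ring]
      _ ≤ K00^3 * (K00/(1+‖z‖)^3) * M :=
          VirialAux.abs_mul3_le
            (by rw [abs_pow]; exact pow_le_pow_left₀ (abs_nonneg _) (b00 z) 3)
            (d00 z) (hMψ1 _)
      _ = (K00^3*K00*M) / (1+‖z‖)^3 := by ring
  -- split the integral and conclude
  have hIAneg : Integrable (fun x : ℝ×ℝ =>
      -(p1 (VirialAux.Afun (φ t) ψ (deriv ψ) (deriv (deriv ψ)) (ρ t)) x)) := hIA.neg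
  have hIB' : Integrable (fun x : ℝ×ℝ => p2 (VirialAux.Bfun (φ t) ψ (ρ t)) x) := hIB
  have hf1 : Integrable (fun x : ℝ×ℝ =>
      -(p1 (VirialAux.Afun (φ t) ψ (deriv ψ) (deriv (deriv ψ)) (ρ t)) x)
      - p2 (VirialAux.Bfun (φ t) ψ (ρ t)) x) := hIAneg.sub hIB'
  have hE1 : Integrable (fun x : ℝ×ℝ =>
      -((3*(p1 (φ t) x)^2 + (p2 (φ t) x)^2) * deriv ψ (x.1 - ρ t))) := hIe1.neg
  have hE12 : Integrable (fun x : ℝ×ℝ =>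
      -((3*(p1 (φ t) x)^2 + (p2 (φ t) x)^2) * deriv ψ (x.1 - ρ t))
      + φ t x ^2 * deriv (deriv (deriv ψ)) (x.1 - ρ t)) := hE1.add hIe2
  have hE3 : Integrable (fun x : ℝ×ℝ =>
      derivWithin ρ (Set.Icc (0:ℝ) t₀) t * (φ t x ^2 * deriv ψ (x.1 - ρ t))) :=
    hIe3.const_mul _
  have hE123 : Integrable (fun x : ℝ×ℝ =>
      -((3*(p1 (φ t) x)^2 + (p2 (φ t) x)^2) * deriv ψ (x.1 - ρ t))
      + φ t x ^2 * deriv (deriv (deriv ψ)) (x.1 - ρ t)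
      - derivWithin ρ (Set.Icc (0:ℝ) t₀) t * (φ t x ^2 * deriv ψ (x.1 - ρ t))) :=
    hE12.sub hE3
  have hE4 : Integrable (fun x : ℝ×ℝ => 3/2 * (φ t x ^4 * deriv ψ (x.1 - ρ t))) :=
    hIe4.const_mul _
  have hf2 : Integrable (fun x : ℝ×ℝ =>
      -((3*(p1 (φ t) x)^2 + (p2 (φ t) x)^2) * deriv ψ (x.1 - ρ t))
      + φ t x ^2 * deriv (deriv (deriv ψ)) (x.1 - ρ t)
      - derivWithin ρ (Set.Icc (0:ℝ) t₀) t * (φ t x ^2 * deriv ψ (x.1 - ρ t))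
      + 3/2 * (φ t x ^4 * deriv ψ (x.1 - ρ t))) := hE123.add hE4
  rw [integral_add hf1 hf2, integral_sub hIAneg hIB', integral_neg, hz1, hz2,
    integral_add hE123 hE4, integral_sub hE12 hE3, integral_add hE1 hIe2, integral_neg,
    integral_const_mul, integral_const_mul]
  ring
end
end
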